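/- arXiv:2211.14706 — 7 statements merged into one kernel-verified Lean document; each statement's English description precedes it below -/
import Mathlib

section
/- Let w ∈ {0, ±1}^n and let A = [I_n, −I_n, w, −w] ∈ ℝ^{n×(2n+2)}. Let Â be the block matrix with k diagonal blocks each equal to A and a final block column of identities: Â = [[A,0,…,0,I_n],[0,A,…,0,I_n],…,[0,0,…,A,I_n]]. Then Â is totally unimodular (every square submatrix has determinant in {0, ±1}). -/
/-!
Every column of `Â` is, up to sign, either a unit vector or a column of
`C = [diag(w, …, w) | (I_n; …; I_n)]`, and adjoining unit columns or signed copies of columns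
preserves total unimodularity. A row `(p, i)` of `C` has at most two nonzero entries: `w i` in
block column `p` and `1` in identity column `i`. Weighting identity column `i` by `-w i` makes them
cancel, so a square submatrix of `C` either has a row with at most one nonzero entry, along which
we expand, or annihilates the weight vector and is singular.
-/

lemma mul_mem_range_signType_cast {R : Type*} [CommRing R] {a b : R}
    (ha : a ∈ Set.range SignType.cast) (hb : b ∈ Set.range SignType.cast) :
    a * b ∈ Set.range SignType.cast := by
  obtain ⟨s, rfl⟩ := ha
  obtain ⟨t, rfl⟩ := hb
  exact ⟨s * t, SignType.coe_mul s t⟩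

namespace Matrix

variable {m n n' R : Type*} [CommRing R]

lemma det_mem_range_signType_cast_of_row_eq_single {k : ℕ}
    {M : Matrix (Fin (k + 1)) (Fin (k + 1)) R} {t x₀ : Fin (k + 1)}
    (hrow : ∀ x, x ≠ x₀ → M t x = 0) (hentry : M t x₀ ∈ Set.range SignType.cast)
    (hminor : (M.submatrix t.succAbove x₀.succAbove).det ∈ Set.range SignType.cast) :
    M.det ∈ Set.range SignType.cast := by
  rw [det_succ_row M t, Fintype.sum_eq_single x₀ fun x hx => by rw [hrow x hx, mul_zero, zero_mul]]
  exact mul_mem_range_signType_cast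
    (mul_mem_range_signType_cast ⟨(-1) ^ (t + x₀ : ℕ), by simp⟩ hentry) hminor

lemma IsTotallyUnimodular.of_apply_eq_sign_mul {A : Matrix m n R} (hA : A.IsTotallyUnimodular)
    {B : Matrix m n' R} (h : n' → n) (s : n' → SignType) (hB : ∀ i j, B i j = s j * A i (h j)) :
    B.IsTotallyUnimodular := by
  rw [isTotallyUnimodular_iff] at hA ⊢
  intro k f g
  have hsub : B.submatrix f g = A.submatrix f (h ∘ g) * diagonal fun x => (s (g x) : R) := by
    ext i j
    simp [hB, mul_diagonal, mul_comm]
  rw [hsub, det_mul, det_diagonal]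
  exact mul_mem_range_signType_cast (hA k f (h ∘ g)) ⟨∏ x, s (g x), map_prod SignType.castHom _ _⟩

lemma isTotallyUnimodular_of_row_pairs_cancel [IsDomain R] {A : Matrix m n R}
    (hentry : ∀ i j, A i j ∈ Set.range SignType.cast) (σ : n → R) (hσ : ∀ j, σ j ≠ 0)
    (hpair : ∀ i j₁ j₂, j₁ ≠ j₂ → A i j₁ ≠ 0 → A i j₂ ≠ 0 →
      (∀ j, j ≠ j₁ → j ≠ j₂ → A i j = 0) ∧ A i j₁ * σ j₁ + A i j₂ * σ j₂ = 0) :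
    A.IsTotallyUnimodular := by
  intro k f g hf hg
  induction k with
  | zero => exact ⟨1, by simp⟩
  | succ k ih =>
    by_cases hsparse : ∃ t x₀, ∀ x, x ≠ x₀ → A (f t) (g x) = 0
    · obtain ⟨t, x₀, hrow⟩ := hsparse
      refine det_mem_range_signType_cast_of_row_eq_single hrow (hentry _ _) ?_
      rw [submatrix_submatrix]
      exact ih _ _ (hf.comp Fin.succAbove_right_injective) (hg.comp Fin.succAbove_right_injective)
    · push Not at hsparse
      refine ⟨0, ?_⟩
      rw [SignType.coe_zero, eq_comm, ← exists_mulVec_eq_zero_iff]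
      refine ⟨σ ∘ g, fun h => hσ (g 0) (congrFun h 0), funext fun t => ?_⟩
      obtain ⟨x₁, -, h₁⟩ := hsparse t 0
      obtain ⟨x₂, hx₂, h₂⟩ := hsparse t x₁
      obtain ⟨hrest, hcancel⟩ := hpair (f t) (g x₁) (g x₂) (hg.ne hx₂.symm) h₁ h₂
      rw [mulVec, dotProduct, Fintype.sum_eq_add x₁ x₂ hx₂.symm fun x hx => by
        simp [hrest _ (hg.ne hx.1) (hg.ne hx.2)]]
      simpa using hcancel

end Matrix

section SignBlock

variable {κ ι R : Type*} [DecidableEq κ] [DecidableEq ι] [CommRing R]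

def signBlockMatrix (w : ι → R) : Matrix (κ × ι) (κ ⊕ ι) R :=
  Matrix.of fun i =>
    Sum.elim (fun q => if i.1 = q then w i.2 else 0) (fun j => if i.2 = j then 1 else 0)

lemma signBlockMatrix_ne_zero {w : ι → R} {p : κ} {a : ι} {j : κ ⊕ ι}
    (h : signBlockMatrix w (p, a) j ≠ 0) : j = .inl p ∨ j = .inr a := by
  rcases j with q | b <;> simp [signBlockMatrix] at h <;> simp [h.1]

lemma signBlockMatrix_isTotallyUnimodular [IsDomain R] {w : ι → R}
    (hw : ∀ i, w i ∈ Set.range SignType.cast) :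
    (signBlockMatrix (κ := κ) w).IsTotallyUnimodular := by
  classical
  -- rows `(p, j)` with `w j = 0` have a single nonzero entry, so `σ (.inr j)` is then arbitrary
  let σ : κ ⊕ ι → R := Sum.elim 1 fun j => if w j = 0 then 1 else -w j
  refine Matrix.isTotallyUnimodular_of_row_pairs_cancel ?_ σ ?_ ?_
  · rintro ⟨p, a⟩ (q | b)
    · simp only [signBlockMatrix, Matrix.of_apply, Sum.elim_inl]
      split_ifs
      exacts [hw a, ⟨0, SignType.coe_zero⟩]
    · simp only [signBlockMatrix, Matrix.of_apply, Sum.elim_inr]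
      split_ifs
      exacts [⟨1, SignType.coe_one⟩, ⟨0, SignType.coe_zero⟩]
  · rintro (_ | b)
    · exact one_ne_zero
    · dsimp only [σ, Sum.elim_inr]
      split_ifs with h
      exacts [one_ne_zero, neg_ne_zero.mpr h]
  · rintro ⟨p, a⟩ j₁ j₂ hne h₁ h₂
    have hsupp : ∀ j, j ≠ .inl p → j ≠ .inr a → signBlockMatrix w (p, a) j = 0 := fun j hp ha =>
      by_contra fun h => (signBlockMatrix_ne_zero h).elim hp ha
    have hcancel (hwa : w a ≠ 0) : signBlockMatrix w (p, a) (.inl p) * σ (.inl p)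
        + signBlockMatrix w (p, a) (.inr a) * σ (.inr a) = 0 := by
      simp [signBlockMatrix, σ, hwa]
    have hwa (h : signBlockMatrix w (p, a) (.inl p) ≠ 0) : w a ≠ 0 := by
      simpa [signBlockMatrix] using h
    rcases signBlockMatrix_ne_zero h₁ with rfl | rfl <;>
      rcases signBlockMatrix_ne_zero h₂ with rfl | rfl
    · exact absurd rfl hne
    · exact ⟨hsupp, hcancel (hwa h₁)⟩
    · exact ⟨fun j h h' => hsupp j h' h, by rw [add_comm]; exact hcancel (hwa h₂)⟩
    · exact absurd rfl hne

def blockColumnSource : (κ × (ι ⊕ ι ⊕ Fin 2)) ⊕ ι → (κ ⊕ ι) ⊕ (κ × ι)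
  | .inl (q, .inl j) | .inl (q, .inr (.inl j)) => .inr (q, j)
  | .inl (q, .inr (.inr _)) => .inl (.inl q)
  | .inr j => .inl (.inr j)

def blockColumnSign : (κ × (ι ⊕ ι ⊕ Fin 2)) ⊕ ι → SignType
  | .inl (_, .inr (.inl _)) => -1
  | .inl (_, .inr (.inr t)) => if t = 0 then 1 else -1
  | .inl (_, .inl _) | .inr _ => 1

end SignBlock

/-- total unimodularity of the block matrix Â. -/
theorem stmt0 (n k : ℕ) (w : Fin n → ℝ) (hw : ∀ j, w j = 0 ∨ w j = 1 ∨ w j = -1)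
    (A : Matrix (Fin n) (Fin n ⊕ Fin n ⊕ Fin 2) ℝ)
    (hA : ∀ i j, A i j = Sum.elim (fun j' => if i = j' then (1:ℝ) else 0)
      (Sum.elim (fun j' => if i = j' then (-1:ℝ) else 0)
        (fun t => if t = 0 then w i else -w i)) j)
    (Ahat : Matrix (Fin k × Fin n) ((Fin k × (Fin n ⊕ Fin n ⊕ Fin 2)) ⊕ Fin n) ℝ)
    (hAhat : ∀ p i q c, Ahat (p, i) (Sum.inl (q, c)) = if p = q then A i c else 0)
    (hAhat' : ∀ p i j, Ahat (p, i) (Sum.inr j) = if i = j then (1:ℝ) else 0) :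
    ∀ (m : ℕ) (r : Fin m → Fin k × Fin n)
      (c : Fin m → (Fin k × (Fin n ⊕ Fin n ⊕ Fin 2)) ⊕ Fin n),
      (Ahat.submatrix r c).det = 0 ∨ (Ahat.submatrix r c).det = 1 ∨
        (Ahat.submatrix r c).det = -1 := by
  have hw' : ∀ i, w i ∈ Set.range SignType.cast := fun i => by
    rcases hw i with h | h | h
    exacts [⟨0, h.symm⟩, ⟨1, by simp [h]⟩, ⟨-1, by simp [h]⟩]
  have hcols : ∀ i j, Ahat i j = blockColumnSign j *
      Matrix.fromCols (signBlockMatrix (κ := Fin k) w) 1 i (blockColumnSource j) := by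
    rintro ⟨p, i⟩ (⟨q, j | j | t⟩ | j) <;>
      simp [hAhat, hA, hAhat', blockColumnSign, blockColumnSource, signBlockMatrix,
        Matrix.one_apply, ite_and]
    split_ifs <;> simp
  have hTU : Ahat.IsTotallyUnimodular :=
    (signBlockMatrix_isTotallyUnimodular hw').fromCols_one.of_apply_eq_sign_mul _ _ hcols
  intro m r c
  obtain ⟨s, hs⟩ := (Matrix.isTotallyUnimodular_iff Ahat).mp hTU m r c
  rw [← hs]
  cases s <;> simp
end

section
/- Let w ∈ {0, ±1}^n. Consider the polyhedron P ⊆ ℝ^{k(2n+2)+2n} of points (β¹,γ¹,θ¹,…,β^k,γ^k,θ^k,α₊,α₋) satisfying β^i − γ^i + w θ^i_1 − w θ^i_2 + α₊ − α₋ = 0 for every i ∈ {1,…,k}, together with the bound constraints 0 ≤ β^i, γ^i ≤ 1 (componentwise), 0 ≤ θ^i_1, θ^i_2 ≤ 1, and 0 ≤ α₊, α₋ ≤ 1 (componentwise). Then every extreme point of P has all coordinates in {0,1}. -/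
/-!
At an extreme point `p` there is no nonzero direction `d` with `p ± t • d ∈ P` for small `t`.
Coordinates strictly between `0` and `1` may be moved freely, so it suffices to find such
directions supported on fractional coordinates and keeping the equations. The equations only
involve the three differences `β - γ`, `θ₁ - θ₂`, `α₊ - α₋`, and a change of a fractional
difference can always be realised by moving a fractional coordinate of its pair. Shifting all
fractional `θ`- and `α`-differences at once (with signs adapted to `w`) shows that all
differences are integers. A pair in `[0,1]²` with integral difference is a `0/1` pair unless
both entries are equal and fractional, and such a pair can be moved along the diagonal.
-/

open Set Filter Topology AddSubgroup

theorem eq_zero_of_eventually_add_smul_mem_extremePoints {E : Type*} [AddCommGroup E]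
    [Module ℝ E] {A : Set E} {x d : E} (hx : x ∈ A.extremePoints ℝ)
    (hd : ∀ᶠ t : ℝ in 𝓝 0, x + t • d ∈ A) : d = 0 := by
  have hneg : ∀ᶠ t : ℝ in 𝓝 0, x + (-t) • d ∈ A :=
    (continuous_neg.tendsto' (0 : ℝ) 0 neg_zero).eventually hd
  obtain ⟨t, ⟨hplus, hminus⟩, ht⟩ :=
    ((hd.and hneg).filter_mono nhdsWithin_le_nhds).and self_mem_nhdsWithin |>.exists
      (f := 𝓝[≠] (0 : ℝ))
  have hmid : x ∈ openSegment ℝ (x + (-t) • d) (x + t • d) :=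
    ⟨1 / 2, 1 / 2, by norm_num, by norm_num, by norm_num, by module⟩
  have htd : (-t) • d = 0 := by simpa using hx.2 hminus hplus hmid
  exact (smul_eq_zero.mp htd).resolve_left (neg_ne_zero.mpr ht)

theorem eventually_add_mul_mem_Icc {x e : ℝ} (hx : x ∈ Icc (0 : ℝ) 1)
    (he : e = 0 ∨ x ∈ Ioo 0 1) : ∀ᶠ t in 𝓝 (0 : ℝ), x + t * e ∈ Icc 0 1 := by
  rcases he with rfl | hx'
  · simpa using hx
  · have hcont : Tendsto (fun t : ℝ => x + t * e) (𝓝 0) (𝓝 x) :=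
      (show Continuous fun t : ℝ => x + t * e by fun_prop).tendsto' 0 x (by simp)
    exact (hcont.eventually (Ioo_mem_nhds hx'.1 hx'.2)).mono fun _ h => Ioo_subset_Icc_self h

theorem mem_zmultiples_one_of_mem_Icc_of_notMem_Ioo {x : ℝ} (hx : x ∈ Icc (0 : ℝ) 1)
    (hx' : x ∉ Ioo 0 1) : x ∈ zmultiples (1 : ℝ) := by
  have : x ∈ ({0, 1} : Set ℝ) := Icc_sdiff_Ioo_same (zero_le_one' ℝ) ▸ ⟨hx, hx'⟩
  rcases this with rfl | rfl
  · exact zero_mem _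
  · exact mem_zmultiples 1

theorem exists_sub_eq_of_sub_notMem_zmultiples {x y δ : ℝ} (hx : x ∈ Icc (0 : ℝ) 1)
    (hy : y ∈ Icc (0 : ℝ) 1) (hδ : δ = 0 ∨ x - y ∉ zmultiples (1 : ℝ)) :
    ∃ e₁ e₂ : ℝ, e₁ - e₂ = δ ∧ (e₁ = 0 ∨ x ∈ Ioo 0 1) ∧ (e₂ = 0 ∨ y ∈ Ioo 0 1) := by
  by_cases hx' : x ∈ Ioo 0 1
  · exact ⟨δ, 0, sub_zero δ, Or.inr hx', Or.inl rfl⟩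
  refine ⟨0, -δ, by ring, Or.inl rfl, ?_⟩
  rcases hδ with rfl | hxy
  · exact Or.inl neg_zero
  by_contra! hy'
  exact hxy (sub_mem (mem_zmultiples_one_of_mem_Icc_of_notMem_Ioo hx hx')
    (mem_zmultiples_one_of_mem_Icc_of_notMem_Ioo hy hy'.2))

theorem eq_zero_or_eq_one_of_sub_mem_zmultiples {x y : ℝ} (hx : x ∈ Icc (0 : ℝ) 1)
    (hy : y ∈ Icc (0 : ℝ) 1) (hxy : x - y ∈ zmultiples (1 : ℝ)) (hdiag : ¬(x = y ∧ x ∈ Ioo 0 1)) :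
    (x = 0 ∨ x = 1) ∧ (y = 0 ∨ y = 1) := by
  obtain ⟨m, hm⟩ := mem_zmultiples_iff.mp hxy
  rw [Int.smul_one_eq_cast] at hm
  have hm₁ : (-1 : ℝ) ≤ m := by linarith [hx.1, hy.2]
  have hm₂ : (m : ℝ) ≤ 1 := by linarith [hx.2, hy.1]
  obtain ⟨h₁, h₂⟩ : -1 ≤ m ∧ m ≤ 1 := ⟨by exact_mod_cast hm₁, by exact_mod_cast hm₂⟩
  interval_cases m
  · push_cast at hm
    exact ⟨Or.inl (by linarith [hx.1, hy.2]), Or.inr (by linarith [hx.1, hy.2])⟩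
  · push_cast at hm
    have hxy : x = y := by linarith
    subst hxy
    by_contra h
    simp only [and_self, not_or] at h
    exact hdiag ⟨rfl, lt_of_le_of_ne hx.1 (Ne.symm h.1), lt_of_le_of_ne hx.2 h.2⟩
  · push_cast at hm
    exact ⟨Or.inr (by linarith [hx.2, hy.1]), Or.inl (by linarith [hx.2, hy.1])⟩

-- `(β, γ, θ₁, θ₂, α₊, α₋)`
abbrev Point (ι κ : Type*) :=
  (ι → κ → ℝ) × (ι → κ → ℝ) × (ι → ℝ) × (ι → ℝ) × (κ → ℝ) × (κ → ℝ)

section Polyhedron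

variable {ι κ : Type*}

def polyhedron (w : κ → ℝ) : Set (Point ι κ) :=
  {p | (∀ i j, p.1 i j - p.2.1 i j + w j * p.2.2.1 i - w j * p.2.2.2.1 i
          + p.2.2.2.2.1 j - p.2.2.2.2.2 j = 0) ∧
      (∀ i j, p.1 i j ∈ Icc 0 1) ∧ (∀ i j, p.2.1 i j ∈ Icc 0 1) ∧
      (∀ i, p.2.2.1 i ∈ Icc 0 1) ∧ (∀ i, p.2.2.2.1 i ∈ Icc 0 1) ∧
      (∀ j, p.2.2.2.2.1 j ∈ Icc 0 1) ∧ (∀ j, p.2.2.2.2.2 j ∈ Icc 0 1)}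

variable [Finite ι] [Finite κ] {w : κ → ℝ} {p : Point ι κ}

theorem eq_zero_of_mem_extremePoints_polyhedron (hp : p ∈ (polyhedron w).extremePoints ℝ)
    {d : Point ι κ}
    (hd : ∀ i j, d.1 i j - d.2.1 i j + w j * d.2.2.1 i - w j * d.2.2.2.1 i
      + d.2.2.2.2.1 j - d.2.2.2.2.2 j = 0)
    (hβ : ∀ i j, d.1 i j = 0 ∨ p.1 i j ∈ Ioo 0 1)
    (hγ : ∀ i j, d.2.1 i j = 0 ∨ p.2.1 i j ∈ Ioo 0 1)
    (hθ₁ : ∀ i, d.2.2.1 i = 0 ∨ p.2.2.1 i ∈ Ioo 0 1)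
    (hθ₂ : ∀ i, d.2.2.2.1 i = 0 ∨ p.2.2.2.1 i ∈ Ioo 0 1)
    (hα₁ : ∀ j, d.2.2.2.2.1 j = 0 ∨ p.2.2.2.2.1 j ∈ Ioo 0 1)
    (hα₂ : ∀ j, d.2.2.2.2.2 j = 0 ∨ p.2.2.2.2.2 j ∈ Ioo 0 1) : d = 0 := by
  obtain ⟨hp₀, bβ, bγ, bθ₁, bθ₂, bα₁, bα₂⟩ := hp.1
  refine eq_zero_of_eventually_add_smul_mem_extremePoints hp ?_
  filter_upwards [
    eventually_all.2 fun i => eventually_all.2 fun j =>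
      eventually_add_mul_mem_Icc (bβ i j) (hβ i j),
    eventually_all.2 fun i => eventually_all.2 fun j =>
      eventually_add_mul_mem_Icc (bγ i j) (hγ i j),
    eventually_all.2 fun i => eventually_add_mul_mem_Icc (bθ₁ i) (hθ₁ i),
    eventually_all.2 fun i => eventually_add_mul_mem_Icc (bθ₂ i) (hθ₂ i),
    eventually_all.2 fun j => eventually_add_mul_mem_Icc (bα₁ j) (hα₁ j),
    eventually_all.2 fun j => eventually_add_mul_mem_Icc (bα₂ j) (hα₂ j)]
    with t cβ cγ cθ₁ cθ₂ cα₁ cα₂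
  refine ⟨fun i j => ?_, cβ, cγ, cθ₁, cθ₂, cα₁, cα₂⟩
  simp only [Prod.fst_add, Prod.snd_add, Prod.smul_fst, Prod.smul_snd, Pi.add_apply,
    Pi.smul_apply, smul_eq_mul]
  linear_combination hp₀ i j + t * hd i j

theorem not_eq_and_mem_Ioo_of_mem_extremePoints_polyhedron
    (hp : p ∈ (polyhedron w).extremePoints ℝ) :
    (∀ i j, ¬(p.1 i j = p.2.1 i j ∧ p.1 i j ∈ Ioo 0 1)) ∧
    (∀ i, ¬(p.2.2.1 i = p.2.2.2.1 i ∧ p.2.2.1 i ∈ Ioo 0 1)) ∧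
    (∀ j, ¬(p.2.2.2.2.1 j = p.2.2.2.2.2 j ∧ p.2.2.2.2.1 j ∈ Ioo 0 1)) := by
  classical
  set dβ : ι → κ → ℝ := fun i j => if p.1 i j = p.2.1 i j ∧ p.1 i j ∈ Ioo 0 1 then 1 else 0
  set dθ : ι → ℝ := fun i => if p.2.2.1 i = p.2.2.2.1 i ∧ p.2.2.1 i ∈ Ioo 0 1 then 1 else 0
  set dα : κ → ℝ := fun j =>
    if p.2.2.2.2.1 j = p.2.2.2.2.2 j ∧ p.2.2.2.2.1 j ∈ Ioo 0 1 then 1 else 0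
  have hd : ((dβ, dβ, dθ, dθ, dα, dα) : Point ι κ) = 0 := by
    refine eq_zero_of_mem_extremePoints_polyhedron hp (fun i j => by ring)
      (fun i j => by dsimp only [dβ]; split_ifs with h; exacts [.inr h.2, .inl rfl])
      (fun i j => by dsimp only [dβ]; split_ifs with h; exacts [.inr (h.1 ▸ h.2), .inl rfl])
      (fun i => by dsimp only [dθ]; split_ifs with h; exacts [.inr h.2, .inl rfl])
      (fun i => by dsimp only [dθ]; split_ifs with h; exacts [.inr (h.1 ▸ h.2), .inl rfl])
      (fun j => by dsimp only [dα]; split_ifs with h; exacts [.inr h.2, .inl rfl])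
      (fun j => by dsimp only [dα]; split_ifs with h; exacts [.inr (h.1 ▸ h.2), .inl rfl])
  simp only [Prod.mk_eq_zero] at hd
  refine ⟨fun i j h => ?_, fun i h => ?_, fun j h => ?_⟩
  · simpa only [dβ, if_pos h, Pi.zero_apply, one_ne_zero] using congrFun (congrFun hd.1 i) j
  · simpa only [dθ, if_pos h, Pi.zero_apply, one_ne_zero] using congrFun hd.2.2.1 i
  · simpa only [dα, if_pos h, Pi.zero_apply, one_ne_zero] using congrFun hd.2.2.2.2.1 j

theorem diff_directions_eq_zero_of_mem_extremePoints_polyhedron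
    (hp : p ∈ (polyhedron w).extremePoints ℝ) {δu : ι → κ → ℝ} {δs : ι → ℝ} {δa : κ → ℝ}
    (hδ : ∀ i j, δu i j + w j * δs i + δa j = 0)
    (hu : ∀ i j, δu i j = 0 ∨ p.1 i j - p.2.1 i j ∉ zmultiples (1 : ℝ))
    (hs : ∀ i, δs i = 0 ∨ p.2.2.1 i - p.2.2.2.1 i ∉ zmultiples (1 : ℝ))
    (ha : ∀ j, δa j = 0 ∨ p.2.2.2.2.1 j - p.2.2.2.2.2 j ∉ zmultiples (1 : ℝ)) :
    δs = 0 ∧ δa = 0 := by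
  obtain ⟨-, bβ, bγ, bθ₁, bθ₂, bα₁, bα₂⟩ := hp.1
  choose eβ eγ heu hβ hγ using fun i j =>
    exists_sub_eq_of_sub_notMem_zmultiples (bβ i j) (bγ i j) (hu i j)
  choose eθ₁ eθ₂ hes hθ₁ hθ₂ using fun i =>
    exists_sub_eq_of_sub_notMem_zmultiples (bθ₁ i) (bθ₂ i) (hs i)
  choose eα₁ eα₂ hea hα₁ hα₂ using fun j =>
    exists_sub_eq_of_sub_notMem_zmultiples (bα₁ j) (bα₂ j) (ha j)
  have hd := eq_zero_of_mem_extremePoints_polyhedron hp (d := (eβ, eγ, eθ₁, eθ₂, eα₁, eα₂))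
    (fun i j => by linear_combination heu i j + w j * hes i + hea j + hδ i j)
    hβ hγ hθ₁ hθ₂ hα₁ hα₂
  simp only [Prod.mk_eq_zero] at hd
  obtain ⟨-, -, rfl, rfl, rfl, rfl⟩ := hd
  exact ⟨funext fun i => by simp [← hes i], funext fun j => by simp [← hea j]⟩

theorem diff_mem_zmultiples_of_mem_extremePoints_polyhedron
    (hw : ∀ j, w j = 0 ∨ w j = 1 ∨ w j = -1) (hp : p ∈ (polyhedron w).extremePoints ℝ) :
    (∀ i j, p.1 i j - p.2.1 i j ∈ zmultiples (1 : ℝ)) ∧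
    (∀ i, p.2.2.1 i - p.2.2.2.1 i ∈ zmultiples (1 : ℝ)) ∧
    (∀ j, p.2.2.2.2.1 j - p.2.2.2.2.2 j ∈ zmultiples (1 : ℝ)) := by
  classical
  obtain ⟨β, γ, θ₁, θ₂, α₁, α₂⟩ := p
  have hp₀ : ∀ i j, β i j - γ i j + w j * θ₁ i - w j * θ₂ i + α₁ j - α₂ j = 0 := hp.1.1
  have hwH : ∀ j, ∀ x ∈ zmultiples (1 : ℝ), w j * x ∈ zmultiples (1 : ℝ) := fun j x hx => by
    rcases hw j with h | h | h <;> simp [h, hx, zero_mem]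
  set χ : ℝ → ℝ := fun x => if x ∈ zmultiples (1 : ℝ) then 0 else 1
  set c : κ → ℝ := fun j => if w j = 0 then 1 else -w j
  have hc : ∀ j, c j ≠ 0 := fun j => by
    rcases hw j with h | h | h <;> simp [c, h]
  -- Move each fractional `θ`-difference by `1` and each fractional `α`-difference by `c j`.
  -- Where `β i j - γ i j` is an integer and `w j = ±1`, the `θ i`- and `α j`-differences are
  -- fractional together, and `c j = -w j` keeps `β - γ` fixed; where `w j = 0`, the
  -- `α j`-difference is itself an integer.
  obtain ⟨hs, ha⟩ := diff_directions_eq_zero_of_mem_extremePoints_polyhedron hp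
    (δu := fun i j => -(w j * χ (θ₁ i - θ₂ i)) - c j * χ (α₁ j - α₂ j))
    (δs := fun i => χ (θ₁ i - θ₂ i)) (δa := fun j => c j * χ (α₁ j - α₂ j)) (fun i j => by ring)
    (fun i j => or_iff_not_imp_right.2 fun hu => by
      rw [not_not] at hu
      have hα : α₁ j - α₂ j ∈ zmultiples (1 : ℝ) ↔ w j * (θ₁ i - θ₂ i) ∈ zmultiples (1 : ℝ) := by
        rw [show α₁ j - α₂ j = -(β i j - γ i j) + -(w j * (θ₁ i - θ₂ i)) by
          linear_combination hp₀ i j, add_mem_cancel_left (neg_mem hu), neg_mem_iff]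
      rcases hw j with h | h | h <;> simp [h, sub_mem_comm_iff] at hα <;>
        simp [χ, c, h, hα] <;> split_ifs <;> norm_num)
    (fun i => by by_cases h : θ₁ i - θ₂ i ∈ zmultiples (1 : ℝ) <;> simp [χ, h])
    (fun j => by by_cases h : α₁ j - α₂ j ∈ zmultiples (1 : ℝ) <;> simp [χ, h])
  have hθ : ∀ i, θ₁ i - θ₂ i ∈ zmultiples (1 : ℝ) := fun i => by
    by_contra h
    simpa [χ, h] using congrFun hs i
  have hα : ∀ j, α₁ j - α₂ j ∈ zmultiples (1 : ℝ) := fun j => by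
    by_contra h
    simpa [χ, h, hc j] using congrFun ha j
  refine ⟨fun i j => ?_, hθ, hα⟩
  rw [show β i j - γ i j = -(w j * (θ₁ i - θ₂ i)) - (α₁ j - α₂ j) by
    linear_combination hp₀ i j]
  exact sub_mem (neg_mem (hwH j _ (hθ i))) (hα j)

end Polyhedron

/-- every extreme point of the polyhedron P (with bound constraints)
has all coordinates in {0,1}. Points are tuples (β, γ, θ₁, θ₂, α₊, α₋). -/
theorem stmt1 (n k : ℕ) (w : Fin n → ℝ) (hw : ∀ j, w j = 0 ∨ w j = 1 ∨ w j = -1)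
    (P : Set ((Fin k → Fin n → ℝ) × (Fin k → Fin n → ℝ) × (Fin k → ℝ) × (Fin k → ℝ) ×
      (Fin n → ℝ) × (Fin n → ℝ)))
    (hP : ∀ p, p ∈ P ↔
      (∀ i j, p.1 i j - p.2.1 i j + w j * p.2.2.1 i - w j * p.2.2.2.1 i
          + p.2.2.2.2.1 j - p.2.2.2.2.2 j = 0) ∧
      (∀ i j, 0 ≤ p.1 i j ∧ p.1 i j ≤ 1) ∧ (∀ i j, 0 ≤ p.2.1 i j ∧ p.2.1 i j ≤ 1) ∧
      (∀ i, 0 ≤ p.2.2.1 i ∧ p.2.2.1 i ≤ 1) ∧ (∀ i, 0 ≤ p.2.2.2.1 i ∧ p.2.2.2.1 i ≤ 1) ∧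
      (∀ j, 0 ≤ p.2.2.2.2.1 j ∧ p.2.2.2.2.1 j ≤ 1) ∧
      (∀ j, 0 ≤ p.2.2.2.2.2 j ∧ p.2.2.2.2.2 j ≤ 1))
    (p : (Fin k → Fin n → ℝ) × (Fin k → Fin n → ℝ) × (Fin k → ℝ) × (Fin k → ℝ) ×
      (Fin n → ℝ) × (Fin n → ℝ))
    (hp : p ∈ Set.extremePoints ℝ P) :
    (∀ i j, p.1 i j = 0 ∨ p.1 i j = 1) ∧ (∀ i j, p.2.1 i j = 0 ∨ p.2.1 i j = 1) ∧
    (∀ i, p.2.2.1 i = 0 ∨ p.2.2.1 i = 1) ∧ (∀ i, p.2.2.2.1 i = 0 ∨ p.2.2.2.1 i = 1) ∧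
    (∀ j, p.2.2.2.2.1 j = 0 ∨ p.2.2.2.2.1 j = 1) ∧
    (∀ j, p.2.2.2.2.2 j = 0 ∨ p.2.2.2.2.2 j = 1) := by
  obtain rfl : P = polyhedron w := Set.ext hP
  obtain ⟨-, bβ, bγ, bθ₁, bθ₂, bα₁, bα₂⟩ := hp.1
  obtain ⟨hβγ, hθ, hα⟩ := diff_mem_zmultiples_of_mem_extremePoints_polyhedron hw hp
  obtain ⟨dβγ, dθ, dα⟩ := not_eq_and_mem_Ioo_of_mem_extremePoints_polyhedron hp
  have βγ := fun i j =>
    eq_zero_or_eq_one_of_sub_mem_zmultiples (bβ i j) (bγ i j) (hβγ i j) (dβγ i j)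
  have θ := fun i => eq_zero_or_eq_one_of_sub_mem_zmultiples (bθ₁ i) (bθ₂ i) (hθ i) (dθ i)
  have α := fun j => eq_zero_or_eq_one_of_sub_mem_zmultiples (bα₁ j) (bα₂ j) (hα j) (dα j)
  exact ⟨fun i j => (βγ i j).1, fun i j => (βγ i j).2, fun i => (θ i).1, fun i => (θ i).2,
    fun j => (α j).1, fun j => (α j).2⟩
end

section
/- Let w ∈ {0, ±1}^n and let R be the polyhedral cone of points (β¹,γ¹,θ¹,…,β^k,γ^k,θ^k,α) with β^i, γ^i ∈ ℝ^n_{≥0}, θ^i ∈ ℝ²_{≥0}, α ∈ ℝ^n, satisfying β^i − γ^i + w θ^i_1 − w θ^i_2 + α = 0 for all i ∈ {1,…,k}. Then every extreme ray of R with sup-norm equal to 1 has all components in {0, ±1}. -/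
/-!
Let `r` be an extreme ray of a cone cut out by linear equations and sign constraints on some
coordinates. If a direction `d` satisfies the equations and vanishes wherever a sign-constrained
coordinate of `r` vanishes, then `r ± ε d` lie in the cone for small `ε > 0`, and extremality
forces `d` to be a multiple of `r`. So it suffices to exhibit one nonzero such `d` with entries in
`{0, ±1}`: as `r` and `d` both have sup-norm `1`, then `r = ±d`.

With `s = b - g` and `t = θ₁ - θ₂` the equations read `s_ij + w_j t_i + α_j = 0`. If `t ≠ 0`, take
for `d` the indicator of a level set `{t_i = c}`, `c ≠ 0`, together with the matching level set
`{-w_j α_j = c}` of the columns; if `t = 0` but `α ≠ 0`, the indicator of a level set of `α`;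
if `t = 0` and `α = 0`, then `b = g` and `θ₁ = θ₂`, and a pair `b_ij = g_ij ≠ 0` or
`θ₁_i = θ₂_i ≠ 0` gives `d`.
-/

open Filter Topology

section ExtremeRay

variable {E F Ω : Type*} [AddCommGroup E] [Module ℝ E] [AddCommGroup F] [Module ℝ F]

def IsExtremeRay (R : Set E) (r : E) : Prop :=
  ∀ y ∈ R, ∀ z ∈ R, r = y + z → (∃ c : ℝ, 0 ≤ c ∧ y = c • r) ∨ (∃ c : ℝ, 0 ≤ c ∧ z = c • r)

theorem IsExtremeRay.exists_sub_eq_smul {R : Set E} {r y z : E} (h : IsExtremeRay R r)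
    (hy : y ∈ R) (hz : z ∈ R) (hyz : r = y + z) : ∃ μ : ℝ, y - z = μ • r := by
  rcases h y hy z hz hyz with ⟨c, -, rfl⟩ | ⟨c, -, rfl⟩
  · exact ⟨2 * c - 1, by linear_combination (norm := module) hyz⟩
  · exact ⟨1 - 2 * c, by linear_combination (norm := module) -hyz⟩

theorem exists_pos_abs_mul_le [Finite Ω] {x d : Ω → ℝ} (hx : 0 ≤ x)
    (hd : ∀ ω, x ω = 0 → d ω = 0) : ∃ ε > 0, ∀ ω, |ε * d ω| ≤ x ω := by
  have hsmall : ∀ᶠ ε in 𝓝 (0 : ℝ), ∀ ω, |ε * d ω| ≤ x ω := by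
    refine eventually_all.2 fun ω => ?_
    rcases (hx ω).eq_or_lt with h | h
    · exact .of_forall fun ε => by simp [hd ω h.symm, ← h]
    · have hcont : Continuous fun ε : ℝ => |ε * d ω| := by fun_prop
      exact (hcont.tendsto' 0 0 (by simp)).eventually (ge_mem_nhds h)
  have hpos := hsmall.filter_mono (nhdsWithin_le_nhds (s := Set.Ioi 0))
  exact (hpos.and self_mem_nhdsWithin).exists.imp fun ε h => ⟨h.2, h.1⟩

def polyhedralCone (L : E →ₗ[ℝ] F) (c : E →ₗ[ℝ] Ω → ℝ) (S : Set Ω) : Set E :=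
  {x | L x = 0 ∧ ∀ ω ∈ S, 0 ≤ c x ω}

theorem IsExtremeRay.exists_eq_smul_of_face [Finite Ω] {L : E →ₗ[ℝ] F} {c : E →ₗ[ℝ] Ω → ℝ}
    {S : Set Ω} {r d : E} (hext : IsExtremeRay (polyhedralCone L c S) r)
    (hr : r ∈ polyhedralCone L c S) (hLd : L d = 0) (hd : ∀ ω ∈ S, c r ω = 0 → c d ω = 0) :
    ∃ μ : ℝ, d = μ • r := by
  obtain ⟨ε, hε, hεd⟩ := exists_pos_abs_mul_le (x := fun ω : S => c r ω) (d := fun ω => c d ω)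
    (fun ω => hr.2 ω ω.2) (fun ω => hd ω ω.2)
  have hmem : ∀ s : ℝ, s = 1 ∨ s = -1 → (2⁻¹ : ℝ) • (r + s • ε • d) ∈ polyhedralCone L c S := by
    intro s hs
    refine ⟨by simp [hr.1, hLd], fun ω hω => ?_⟩
    have := abs_le.1 (hεd ⟨ω, hω⟩)
    rcases hs with rfl | rfl <;>
      simp only [neg_smul, one_smul, smul_add, smul_neg, map_add, map_smul, map_neg,
        Pi.add_apply, Pi.neg_apply, Pi.smul_apply, smul_eq_mul] <;> linarith
  obtain ⟨μ, hμ⟩ := hext.exists_sub_eq_smul (hmem 1 (.inl rfl)) (hmem (-1) (.inr rfl)) (by module)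
  have hεd : ε • d = μ • r := by rw [← hμ]; module
  exact ⟨μ / ε, by rw [div_eq_inv_mul, mul_smul, ← hεd, inv_smul_smul₀ hε.ne']⟩

end ExtremeRay

section Sign

variable {Ω : Type*}

def IsSign (x : ℝ) : Prop := x = 0 ∨ x = 1 ∨ x = -1

theorem isSign_iff_abs {x : ℝ} : IsSign x ↔ |x| = 0 ∨ |x| = 1 := by
  rw [abs_eq_zero, abs_eq zero_le_one]; rfl

theorem isSign_zero : IsSign 0 := Or.inl rfl

theorem isSign_one : IsSign 1 := Or.inr (Or.inl rfl)

theorem IsSign.mul {x y : ℝ} (hx : IsSign x) (hy : IsSign y) : IsSign (x * y) := by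
  rw [isSign_iff_abs, abs_mul] at *
  rcases hx with h | h <;> rw [h] <;> simp only [zero_mul, one_mul, true_or, hy]

theorem IsSign.neg {x : ℝ} (hx : IsSign x) : IsSign (-x) := by
  rwa [isSign_iff_abs, abs_neg, ← isSign_iff_abs]

theorem isSign_ite_sub_ite (p q : Prop) [Decidable p] [Decidable q] :
    IsSign ((if p then 1 else 0) - if q then 1 else 0) := by
  unfold IsSign; split_ifs <;> norm_num

theorem IsSign.ite {x : ℝ} (hx : IsSign x) (p : Prop) [Decidable p] :
    IsSign (if p then x else 0) := by
  split_ifs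
  exacts [hx, isSign_zero]

theorem isSign_of_eq_smul {u v : Ω → ℝ} {μ : ℝ} (hv : ∀ ω, IsSign (v ω)) (hv0 : v ≠ 0)
    (hu : ∀ ω, |u ω| ≤ 1) (hu1 : ∃ ω, |u ω| = 1) (h : v = μ • u) (ω : Ω) : IsSign (u ω) := by
  have habs : ∀ ω, |v ω| = |μ| * |u ω| := fun ω => by simp [h, abs_mul]
  have hμ : |μ| = 1 := by
    obtain ⟨ω₀, hω₀⟩ := hu1
    obtain ⟨ω₁, hω₁⟩ := Function.ne_iff.1 hv0
    have h₀ : |v ω₀| ≤ 1 := by rcases isSign_iff_abs.1 (hv ω₀) with h | h <;> simp [h]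
    have h₁ : |v ω₁| = 1 := (isSign_iff_abs.1 (hv ω₁)).resolve_left (by simpa using hω₁)
    rw [habs, hω₀, mul_one] at h₀
    rw [habs] at h₁
    nlinarith [hu ω₁, abs_nonneg μ]
  have huv : |u ω| = |v ω| := by rw [habs, hμ, one_mul]
  rw [isSign_iff_abs, huv, ← isSign_iff_abs]
  exact hv ω

end Sign

namespace RecessionCone

variable {n k : ℕ}

abbrev Point (n k : ℕ) : Type :=
  (Fin k → Fin n → ℝ) × (Fin k → Fin n → ℝ) × (Fin k → ℝ) × (Fin k → ℝ) × (Fin n → ℝ)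

abbrev Coord (n k : ℕ) : Type := ((Fin k × Fin n) ⊕ (Fin k × Fin n) ⊕ Fin k ⊕ Fin k) ⊕ Fin n

-- The sign-constrained coordinates are those of `b`, `g`, `θ₁`, `θ₂`, indexed by `Sum.inl`.
def coords : Point n k →ₗ[ℝ] Coord n k → ℝ where
  toFun p := Sum.elim (Sum.elim (fun q => p.1 q.1 q.2)
    (Sum.elim (fun q => p.2.1 q.1 q.2) (Sum.elim p.2.2.1 p.2.2.2.1))) p.2.2.2.2
  map_add' p q := by ext ((_ | _ | _ | _) | _) <;> rfl
  map_smul' a p := by ext ((_ | _ | _ | _) | _) <;> rfl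

def residual (w : Fin n → ℝ) : Point n k →ₗ[ℝ] Fin k → Fin n → ℝ where
  toFun p i j := p.1 i j - p.2.1 i j + w j * p.2.2.1 i - w j * p.2.2.2.1 i + p.2.2.2.2 j
  map_add' p q := by ext i j; simp only [Prod.fst_add, Prod.snd_add, Pi.add_apply]; ring
  map_smul' a p := by
    ext i j
    simp only [Prod.smul_fst, Prod.smul_snd, Pi.smul_apply, smul_eq_mul, RingHom.id_apply]
    ring

abbrev cone (w : Fin n → ℝ) : Set (Point n k) :=
  polyhedralCone (residual w) coords (Set.range Sum.inl)

theorem mem_cone_iff {w : Fin n → ℝ} {p : Point n k} : p ∈ cone w ↔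
    (∀ i j, p.1 i j - p.2.1 i j + w j * p.2.2.1 i - w j * p.2.2.2.1 i + p.2.2.2.2 j = 0) ∧
      (∀ i j, 0 ≤ p.1 i j) ∧ (∀ i j, 0 ≤ p.2.1 i j) ∧
      (∀ i, 0 ≤ p.2.2.1 i) ∧ (∀ i, 0 ≤ p.2.2.2.1 i) := by
  simp [polyhedralCone, residual, coords, funext_iff, Sum.forall]

theorem forall_coords_iff {P : ℝ → Prop} {p : Point n k} : (∀ ω, P (coords p ω)) ↔
    (∀ i j, P (p.1 i j)) ∧ (∀ i j, P (p.2.1 i j)) ∧ (∀ i, P (p.2.2.1 i)) ∧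
      (∀ i, P (p.2.2.2.1 i)) ∧ ∀ j, P (p.2.2.2.2 j) := by
  simp [coords, Sum.forall, and_assoc]

theorem exists_coords_iff {P : ℝ → Prop} {p : Point n k} : (∃ ω, P (coords p ω)) ↔
    (∃ i j, P (p.1 i j)) ∨ (∃ i j, P (p.2.1 i j)) ∨ (∃ i, P (p.2.2.1 i)) ∨
      (∃ i, P (p.2.2.2.1 i)) ∨ ∃ j, P (p.2.2.2.2 j) := by
  simp [coords, Sum.exists, or_assoc]

def IsSignedFaceDirection (w : Fin n → ℝ) (r d : Point n k) : Prop :=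
  residual w d = 0 ∧ (∀ ω ∈ Set.range Sum.inl, coords r ω = 0 → coords d ω = 0) ∧
    (∀ ω, IsSign (coords d ω)) ∧ coords d ≠ 0

variable {w : Fin n → ℝ} {b g db dg : Fin k → Fin n → ℝ} {θ₁ θ₂ dθ₁ dθ₂ : Fin k → ℝ}
  {α dα : Fin n → ℝ}

theorem isSignedFaceDirection_mk_iff :
    IsSignedFaceDirection w (b, g, θ₁, θ₂, α) (db, dg, dθ₁, dθ₂, dα) ↔
      (∀ i j, db i j - dg i j + w j * dθ₁ i - w j * dθ₂ i + dα j = 0) ∧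
      ((∀ i j, b i j = 0 → db i j = 0) ∧ (∀ i j, g i j = 0 → dg i j = 0) ∧
        (∀ i, θ₁ i = 0 → dθ₁ i = 0) ∧ (∀ i, θ₂ i = 0 → dθ₂ i = 0)) ∧
      ((∀ i j, IsSign (db i j)) ∧ (∀ i j, IsSign (dg i j)) ∧ (∀ i, IsSign (dθ₁ i)) ∧
        (∀ i, IsSign (dθ₂ i)) ∧ ∀ j, IsSign (dα j)) ∧
      ((∃ i j, db i j ≠ 0) ∨ (∃ i j, dg i j ≠ 0) ∨ (∃ i, dθ₁ i ≠ 0) ∨ (∃ i, dθ₂ i ≠ 0) ∨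
        ∃ j, dα j ≠ 0) := by
  simp only [IsSignedFaceDirection, residual, coords, funext_iff, Function.ne_iff,
    Set.forall_mem_range, Sum.forall, Sum.exists, Prod.forall, Prod.exists, LinearMap.coe_mk,
    AddHom.coe_mk, Sum.elim_inl, Sum.elim_inr, Pi.zero_apply, and_assoc, or_assoc]

theorem exists_isSignedFaceDirection_of_b_ne_zero_of_g_ne_zero {i₀ : Fin k} {j₀ : Fin n}
    (hb : b i₀ j₀ ≠ 0) (hg : g i₀ j₀ ≠ 0) : ∃ d, IsSignedFaceDirection w (b, g, θ₁, θ₂, α) d := by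
  let e : Fin k → Fin n → ℝ := fun i j => if i = i₀ ∧ j = j₀ then 1 else 0
  have he : ∀ {x : Fin k → Fin n → ℝ}, x i₀ j₀ ≠ 0 → ∀ i j, x i j = 0 → e i j = 0 := by
    rintro x hx i j hxij
    refine if_neg ?_
    rintro ⟨rfl, rfl⟩
    exact hx hxij
  have hsign : ∀ i j, IsSign (e i j) := fun _ _ => isSign_one.ite _
  refine ⟨(e, e, 0, 0, 0), isSignedFaceDirection_mk_iff.2
    ⟨by simp, ⟨he hb, he hg, by simp, by simp⟩,
      ⟨hsign, hsign, fun _ => isSign_zero, fun _ => isSign_zero, fun _ => isSign_zero⟩,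
      Or.inl ⟨i₀, j₀, by simp [e]⟩⟩⟩

theorem exists_isSignedFaceDirection_of_θ₁_ne_zero_of_θ₂_ne_zero {i₀ : Fin k}
    (h₁ : θ₁ i₀ ≠ 0) (h₂ : θ₂ i₀ ≠ 0) : ∃ d, IsSignedFaceDirection w (b, g, θ₁, θ₂, α) d := by
  let e : Fin k → ℝ := fun i => if i = i₀ then 1 else 0
  have he : ∀ {x : Fin k → ℝ}, x i₀ ≠ 0 → ∀ i, x i = 0 → e i = 0 := by
    rintro x hx i hxi
    refine if_neg ?_
    rintro rfl
    exact hx hxi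
  have hsign : ∀ i, IsSign (e i) := fun _ => isSign_one.ite _
  refine ⟨(0, 0, e, e, 0), isSignedFaceDirection_mk_iff.2
    ⟨by simp, ⟨by simp, by simp, he h₁, he h₂⟩,
      ⟨fun _ _ => isSign_zero, fun _ _ => isSign_zero, hsign, hsign, fun _ => isSign_zero⟩,
      Or.inr (Or.inr (Or.inl ⟨i₀, by simp [e]⟩))⟩⟩

-- Turns a direction `(ds, dt, dα)` of `(b - g, θ₁ - θ₂, α)` into one of `(b, g, θ₁, θ₂, α)`.
noncomputable def lift (g : Fin k → Fin n → ℝ) (θ₂ : Fin k → ℝ) (ds : Fin k → Fin n → ℝ)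
    (dt : Fin k → ℝ) (dα : Fin n → ℝ) : Point n k :=
  (fun i j => if g i j = 0 then ds i j else 0, fun i j => if g i j = 0 then 0 else -ds i j,
    fun i => if θ₂ i = 0 then dt i else 0, fun i => if θ₂ i = 0 then 0 else -dt i, dα)

theorem isSignedFaceDirection_lift {ds : Fin k → Fin n → ℝ} {dt : Fin k → ℝ}
    (hres : ∀ i j, ds i j + w j * dt i + dα j = 0)
    (hds : ∀ i j, b i j - g i j = 0 → ds i j = 0) (hdt : ∀ i, θ₁ i - θ₂ i = 0 → dt i = 0)
    (hds_sign : ∀ i j, IsSign (ds i j)) (hdt_sign : ∀ i, IsSign (dt i))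
    (hdα_sign : ∀ j, IsSign (dα j)) (hne : (∃ i, dt i ≠ 0) ∨ ∃ j, dα j ≠ 0) :
    IsSignedFaceDirection w (b, g, θ₁, θ₂, α) (lift g θ₂ ds dt dα) := by
  rw [lift, isSignedFaceDirection_mk_iff]
  refine ⟨fun i j => ?_, ⟨fun i j hb => ?_, fun i j hg => by simp [hg], fun i h₁ => ?_,
    fun i h₂ => by simp [h₂]⟩, ⟨fun i j => ?_, fun i j => ?_, fun i => ?_, fun i => ?_, hdα_sign⟩,
    ?_⟩
  · have := hres i j
    split_ifs <;> linarith
  · split_ifs with hg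
    exacts [hds i j (by simp [hb, hg]), rfl]
  · split_ifs with h₂
    exacts [hdt i (by simp [h₁, h₂]), rfl]
  · exact (hds_sign i j).ite _
  · split_ifs
    exacts [isSign_zero, (hds_sign i j).neg]
  · exact (hdt_sign i).ite _
  · split_ifs
    exacts [isSign_zero, (hdt_sign i).neg]
  · rcases hne with ⟨i, hi⟩ | ⟨j, hj⟩
    · by_cases h₂ : θ₂ i = 0
      · exact Or.inr (Or.inr (Or.inl ⟨i, by simpa [h₂] using hi⟩))
      · exact Or.inr (Or.inr (Or.inr (Or.inl ⟨i, by simpa [h₂] using hi⟩)))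
    · exact Or.inr (Or.inr (Or.inr (Or.inr ⟨j, hj⟩)))

theorem exists_isSignedFaceDirection_of_θ_sub_ne_zero (hw : ∀ j, IsSign (w j))
    (hres : ∀ i j, b i j - g i j + w j * θ₁ i - w j * θ₂ i + α j = 0) {i₀ : Fin k}
    (hi₀ : θ₁ i₀ - θ₂ i₀ ≠ 0) : ∃ d, IsSignedFaceDirection w (b, g, θ₁, θ₂, α) d := by
  let φ : ℝ → ℝ := fun x => if x = θ₁ i₀ - θ₂ i₀ then 1 else 0
  refine ⟨lift g θ₂ (fun i j => w j * (φ (-w j * α j) - φ (θ₁ i - θ₂ i)))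
    (fun i => φ (θ₁ i - θ₂ i)) (fun j => -w j * φ (-w j * α j)),
    isSignedFaceDirection_lift (fun i j => by ring) (fun i j hs => ?_) (fun i ht => ?_)
      (fun i j => (hw j).mul (isSign_ite_sub_ite _ _)) (fun i => isSign_one.ite _)
      (fun j => (hw j).neg.mul (isSign_one.ite _)) (Or.inl ⟨i₀, by simp [φ]⟩)⟩
  -- `s_ij = 0` gives `-w_j α_j = w_j² t_i`, so the two indicators agree unless `w_j = 0`
  · have hα : α j = -(w j * (θ₁ i - θ₂ i)) := by linear_combination hres i j - hs
    rcases hw j with h | h | h <;> simp [h, hα]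
  · simp [φ, ht, hi₀.symm]

theorem exists_isSignedFaceDirection_of_α_ne_zero (ht : ∀ i, θ₁ i - θ₂ i = 0)
    (hres : ∀ i j, b i j - g i j + w j * θ₁ i - w j * θ₂ i + α j = 0) {j₀ : Fin n}
    (hj₀ : α j₀ ≠ 0) : ∃ d, IsSignedFaceDirection w (b, g, θ₁, θ₂, α) d := by
  let φ : ℝ → ℝ := fun x => if x = α j₀ then 1 else 0
  refine ⟨lift g θ₂ (fun _ j => -φ (α j)) 0 (fun j => φ (α j)),
    isSignedFaceDirection_lift (fun i j => by simp) (fun i j hs => ?_) (fun _ _ => rfl)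
      (fun _ _ => (isSign_one.ite _).neg) (fun _ => isSign_zero) (fun _ => isSign_one.ite _)
      (Or.inr ⟨j₀, by simp [φ]⟩)⟩
  have hα : α j = 0 := by linear_combination hres i j - hs - w j * ht i
  simp [φ, hα, hj₀.symm]

theorem exists_isSignedFaceDirection (hw : ∀ j, IsSign (w j)) {r : Point n k} (hr : r ∈ cone w)
    (hr0 : r ≠ 0) : ∃ d, IsSignedFaceDirection w r d := by
  obtain ⟨b, g, θ₁, θ₂, α⟩ := r
  have hres := (mem_cone_iff.1 hr).1
  by_cases ht : ∃ i, θ₁ i - θ₂ i ≠ 0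
  · obtain ⟨i₀, hi₀⟩ := ht
    exact exists_isSignedFaceDirection_of_θ_sub_ne_zero hw hres hi₀
  push Not at ht
  by_cases hα : ∃ j, α j ≠ 0
  · obtain ⟨j₀, hj₀⟩ := hα
    exact exists_isSignedFaceDirection_of_α_ne_zero ht hres hj₀
  push Not at hα
  have hbg : ∀ i j, b i j = g i j := fun i j => by
    linear_combination hres i j - w j * ht i - hα j
  have hθ : ∀ i, θ₁ i = θ₂ i := fun i => by linear_combination ht i
  by_cases hb : ∃ i j, b i j ≠ 0
  · obtain ⟨i₀, j₀, hb⟩ := hb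
    exact exists_isSignedFaceDirection_of_b_ne_zero_of_g_ne_zero hb (hbg i₀ j₀ ▸ hb)
  by_cases hθ₁ : ∃ i, θ₁ i ≠ 0
  · obtain ⟨i₀, h⟩ := hθ₁
    exact exists_isSignedFaceDirection_of_θ₁_ne_zero_of_θ₂_ne_zero h (hθ i₀ ▸ h)
  push Not at hb hθ₁
  refine absurd ?_ hr0
  simp only [Prod.mk_eq_zero]
  exact ⟨funext₂ hb, funext₂ fun i j => hbg i j ▸ hb i j, funext hθ₁,
    funext fun i => hθ i ▸ hθ₁ i, funext hα⟩

end RecessionCone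

open RecessionCone in
/-- every extreme ray of the recession cone R, normalized to sup-norm 1,
has all components in {0, ±1}. Points are tuples (β, γ, θ₁, θ₂, α). -/
theorem stmt2 (n k : ℕ) (w : Fin n → ℝ) (hw : ∀ j, w j = 0 ∨ w j = 1 ∨ w j = -1)
    (R : Set ((Fin k → Fin n → ℝ) × (Fin k → Fin n → ℝ) × (Fin k → ℝ) × (Fin k → ℝ) ×
      (Fin n → ℝ)))
    (hR : ∀ p, p ∈ R ↔
      (∀ i j, p.1 i j - p.2.1 i j + w j * p.2.2.1 i - w j * p.2.2.2.1 i
          + p.2.2.2.2 j = 0) ∧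
      (∀ i j, 0 ≤ p.1 i j) ∧ (∀ i j, 0 ≤ p.2.1 i j) ∧
      (∀ i, 0 ≤ p.2.2.1 i) ∧ (∀ i, 0 ≤ p.2.2.2.1 i))
    (r : (Fin k → Fin n → ℝ) × (Fin k → Fin n → ℝ) × (Fin k → ℝ) × (Fin k → ℝ) ×
      (Fin n → ℝ))
    (hrR : r ∈ R) (hr0 : r ≠ 0)
    -- r is an extreme ray: it cannot be written as a sum of two elements of R
    -- neither of which is a nonnegative multiple of r
    (hext : ∀ y ∈ R, ∀ z ∈ R, r = y + z →
      (∃ c : ℝ, 0 ≤ c ∧ y = c • r) ∨ (∃ c : ℝ, 0 ≤ c ∧ z = c • r))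
    -- sup-norm of r is 1
    (hbd : (∀ i j, |r.1 i j| ≤ 1) ∧ (∀ i j, |r.2.1 i j| ≤ 1) ∧ (∀ i, |r.2.2.1 i| ≤ 1) ∧
      (∀ i, |r.2.2.2.1 i| ≤ 1) ∧ (∀ j, |r.2.2.2.2 j| ≤ 1))
    (hone : (∃ i j, |r.1 i j| = 1) ∨ (∃ i j, |r.2.1 i j| = 1) ∨ (∃ i, |r.2.2.1 i| = 1) ∨
      (∃ i, |r.2.2.2.1 i| = 1) ∨ (∃ j, |r.2.2.2.2 j| = 1)) :
    (∀ i j, r.1 i j = 0 ∨ r.1 i j = 1 ∨ r.1 i j = -1) ∧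
    (∀ i j, r.2.1 i j = 0 ∨ r.2.1 i j = 1 ∨ r.2.1 i j = -1) ∧
    (∀ i, r.2.2.1 i = 0 ∨ r.2.2.1 i = 1 ∨ r.2.2.1 i = -1) ∧
    (∀ i, r.2.2.2.1 i = 0 ∨ r.2.2.2.1 i = 1 ∨ r.2.2.2.1 i = -1) ∧
    (∀ j, r.2.2.2.2 j = 0 ∨ r.2.2.2.2 j = 1 ∨ r.2.2.2.2 j = -1) := by
  obtain rfl : R = cone w := Set.ext fun p => (hR p).trans mem_cone_iff.symm
  obtain ⟨d, hLd, hsupp, hsign, hd0⟩ := exists_isSignedFaceDirection hw hrR hr0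
  obtain ⟨μ, rfl⟩ := IsExtremeRay.exists_eq_smul_of_face hext hrR hLd hsupp
  exact forall_coords_iff.1 <| isSign_of_eq_smul hsign hd0
    (forall_coords_iff (P := (|·| ≤ 1)) |>.2 hbd) (exists_coords_iff (P := (|·| = 1)) |>.2 hone)
    (map_smul _ _ _)
end

section
/- Let w ∈ {0, ±1}^n, a₁,…,a_k ∈ {0,1}, and let P be the polyhedron of points (β¹,γ¹,θ¹,…,β^k,γ^k,θ^k,α₊,α₋) with β^i,γ^i ∈ ℝ^n_{≥0}, θ^i ∈ ℝ²_{≥0}, α₊,α₋ ∈ ℝ^n_{≥0}, satisfying β^i − γ^i + w θ^i_1 − w θ^i_2 + α₊ − α₋ = a_i w for all i ∈ {1,…,k}. Then every extreme point of P has all coordinates in {0,1}. -/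
open Filter Topology

/-!
At an extreme point `p` there is no nonzero direction `d` with `p ± ε d` feasible for small `ε`,
i.e. no `d ≠ 0` satisfying the homogeneous equations and vanishing where `p` vanishes.
Moving both variables of a pair `(β, γ)`, `(θ₁, θ₂)` or `(α₊, α₋)` together shows that at most one
of them is positive, so it suffices to show that their differences lie in `{-1, 0, 1}`.

A column with `wⱼ = 0` is decoupled from the rows, and shifting `α₊ⱼ - α₋ⱼ` against every
`βᵢⱼ - γᵢⱼ` forces `α₊ⱼ = α₋ⱼ`. Otherwise, with `uᵢ = aᵢ - (θ₁ᵢ - θ₂ᵢ)` and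
`vⱼ = wⱼ (α₊ⱼ - α₋ⱼ)`, the equations read `βᵢⱼ - γᵢⱼ = wⱼ (uᵢ - vⱼ)`. If some `uᵢ` or `vⱼ` took a
value `c ∉ {0, 1}`, shifting all the `uᵢ` and `vⱼ` equal to `c` at once would be a feasible
direction: differences inside this level set do not move, those across it are nonzero, and
`c ≠ aᵢ`, `c ≠ 0` keep the `θ` and `α` pairs away from zero. Hence `u` and `v` are `0/1`-valued.
-/

theorem eq_zero_of_eventually_add_smul_mem {E : Type*} [AddCommGroup E] [Module ℝ E] {A : Set E}
    {x d : E} (hx : x ∈ A.extremePoints ℝ) (hd : ∀ᶠ ε in 𝓝 (0 : ℝ), x + ε • d ∈ A) :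
    d = 0 := by
  have hd' : ∀ᶠ ε in 𝓝 (0 : ℝ), x + (-ε) • d ∈ A :=
    (tendsto_neg (0 : ℝ)).eventually (by rwa [neg_zero])
  obtain ⟨ε, ⟨hplus, hminus⟩, hε⟩ := ((hd.and hd').filter_mono nhdsWithin_le_nhds
    |>.and (self_mem_nhdsWithin : {ε : ℝ | ε ≠ 0} ∈ 𝓝[≠] 0)).exists
  have hmid : x ∈ openSegment ℝ (x + ε • d) (x + (-ε) • d) :=
    ⟨1 / 2, 1 / 2, by norm_num, by norm_num, by norm_num, by module⟩
  have := ((mem_extremePoints.1 hx).2 _ hplus _ hminus hmid).1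
  exact (smul_eq_zero.1 (by simpa using this)).resolve_left hε

theorem eventually_nonneg_add_mul {x d : ℝ} (hx : 0 ≤ x) (hd : x = 0 → d = 0) :
    ∀ᶠ ε in 𝓝 (0 : ℝ), 0 ≤ x + ε * d := by
  rcases hx.eq_or_lt with rfl | hx
  · simp [hd rfl]
  · have : Tendsto (fun ε : ℝ => x + ε * d) (𝓝 0) (𝓝 x) := by
      simpa using (tendsto_id (x := 𝓝 (0 : ℝ))).mul_const d |>.const_add x
    exact (this.eventually_const_lt hx).mono fun _ h => h.le

theorem mul_div_add_mul_div_eq_self {x y δ : ℝ} (h : x + y = 0 → δ = 0) :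
    δ * x / (x + y) + δ * y / (x + y) = δ := by
  by_cases hxy : x + y = 0
  · simp [h hxy]
  · field_simp

theorem eq_zero_or_one_of_sub_eq {x y : ℝ} (hx : 0 ≤ x) (hy : 0 ≤ y) (hxy : x = 0 ∨ y = 0)
    (h : x - y = -1 ∨ x - y = 0 ∨ x - y = 1) : (x = 0 ∨ x = 1) ∧ (y = 0 ∨ y = 1) := by
  rcases hxy with rfl | rfl <;> rcases h with h | h | h <;> constructor <;>
    first | (left; linarith) | (right; linarith)

theorem mul_sub_eq_neg_one_or_zero_or_one {w x y : ℝ} (hw : w = 0 ∨ w = 1 ∨ w = -1)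
    (hx : x = 0 ∨ x = 1) (hy : y = 0 ∨ y = 1) :
    w * (x - y) = -1 ∨ w * (x - y) = 0 ∨ w * (x - y) = 1 := by
  rcases hw with rfl | rfl | rfl <;> rcases hx with rfl | rfl <;> rcases hy with rfl | rfl <;>
    norm_num

abbrev StdFormPoint (n k : ℕ) : Type :=
  (Fin k → Fin n → ℝ) × (Fin k → Fin n → ℝ) × (Fin k → ℝ) × (Fin k → ℝ) × (Fin n → ℝ) ×
    (Fin n → ℝ)

def stdFormPolyhedron {n k : ℕ} (w : Fin n → ℝ) (a : Fin k → ℝ) : Set (StdFormPoint n k) :=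
  {p | (∀ i j, p.1 i j - p.2.1 i j + w j * p.2.2.1 i - w j * p.2.2.2.1 i
          + p.2.2.2.2.1 j - p.2.2.2.2.2 j = a i * w j) ∧
      (∀ i j, 0 ≤ p.1 i j) ∧ (∀ i j, 0 ≤ p.2.1 i j) ∧
      (∀ i, 0 ≤ p.2.2.1 i) ∧ (∀ i, 0 ≤ p.2.2.2.1 i) ∧
      (∀ j, 0 ≤ p.2.2.2.2.1 j) ∧ (∀ j, 0 ≤ p.2.2.2.2.2 j)}

namespace stdFormPolyhedron

variable {n k : ℕ} {w : Fin n → ℝ} {a : Fin k → ℝ} {β γ : Fin k → Fin n → ℝ}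
  {θ₁ θ₂ : Fin k → ℝ} {αp αm : Fin n → ℝ}

theorem direction_eq_zero
    (hp : (β, γ, θ₁, θ₂, αp, αm) ∈ (stdFormPolyhedron w a).extremePoints ℝ)
    {dβ dγ : Fin k → Fin n → ℝ} {dθ₁ dθ₂ : Fin k → ℝ} {dαp dαm : Fin n → ℝ}
    (hd : ∀ i j, dβ i j - dγ i j + w j * dθ₁ i - w j * dθ₂ i + dαp j - dαm j = 0)
    (hβ : ∀ i j, β i j = 0 → dβ i j = 0) (hγ : ∀ i j, γ i j = 0 → dγ i j = 0)
    (hθ₁ : ∀ i, θ₁ i = 0 → dθ₁ i = 0) (hθ₂ : ∀ i, θ₂ i = 0 → dθ₂ i = 0)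
    (hαp : ∀ j, αp j = 0 → dαp j = 0) (hαm : ∀ j, αm j = 0 → dαm j = 0) :
    (dβ, dγ, dθ₁, dθ₂, dαp, dαm) = 0 := by
  obtain ⟨heq, hβ₀, hγ₀, hθ₁₀, hθ₂₀, hαp₀, hαm₀⟩ := extremePoints_subset hp
  refine eq_zero_of_eventually_add_smul_mem hp ?_
  filter_upwards [eventually_all.2 fun i => eventually_all.2 fun j =>
      eventually_nonneg_add_mul (hβ₀ i j) (hβ i j),
    eventually_all.2 fun i => eventually_all.2 fun j =>
      eventually_nonneg_add_mul (hγ₀ i j) (hγ i j),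
    eventually_all.2 fun i => eventually_nonneg_add_mul (hθ₁₀ i) (hθ₁ i),
    eventually_all.2 fun i => eventually_nonneg_add_mul (hθ₂₀ i) (hθ₂ i),
    eventually_all.2 fun j => eventually_nonneg_add_mul (hαp₀ j) (hαp j),
    eventually_all.2 fun j => eventually_nonneg_add_mul (hαm₀ j) (hαm j)]
    with ε h₁ h₂ h₃ h₄ h₅ h₆
  simp only [stdFormPolyhedron, Set.mem_ofPred_eq, Prod.smul_mk, Prod.mk_add_mk, Pi.add_apply,
    Pi.smul_apply, smul_eq_mul]
  exact ⟨fun i j => by linear_combination heq i j + ε * hd i j, h₁, h₂, h₃, h₄, h₅, h₆⟩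

theorem complementary
    (hp : (β, γ, θ₁, θ₂, αp, αm) ∈ (stdFormPolyhedron w a).extremePoints ℝ) :
    (∀ i j, β i j = 0 ∨ γ i j = 0) ∧ (∀ i, θ₁ i = 0 ∨ θ₂ i = 0) ∧ (∀ j, αp j = 0 ∨ αm j = 0) := by
  refine ⟨fun i j => ?_, fun i => ?_, fun j => ?_⟩ <;> by_contra! h
  · have := direction_eq_zero hp (dβ := Pi.single i (Pi.single j 1))
      (dγ := Pi.single i (Pi.single j 1)) (dθ₁ := 0) (dθ₂ := 0) (dαp := 0) (dαm := 0)
      (by simp) ?_ ?_ (by simp) (by simp) (by simp) (by simp)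
    · simp at this
    all_goals intro i' j' h'; by_cases hi : i' = i <;> by_cases hj : j' = j <;> simp_all
  · have := direction_eq_zero hp (dβ := 0) (dγ := 0) (dθ₁ := Pi.single i 1)
      (dθ₂ := Pi.single i 1) (dαp := 0) (dαm := 0)
      (by simp) (by simp) (by simp) ?_ ?_ (by simp) (by simp)
    · simp at this
    all_goals intro i' h'; by_cases hi : i' = i <;> simp_all
  · have := direction_eq_zero hp (dβ := 0) (dγ := 0) (dθ₁ := 0) (dθ₂ := 0)
      (dαp := Pi.single j 1) (dαm := Pi.single j 1)
      (by simp) (by simp) (by simp) (by simp) (by simp) ?_ ?_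
    · simp at this
    all_goals intro j' h'; by_cases hj : j' = j <;> simp_all

theorem reduced_direction_eq_zero
    (hp : (β, γ, θ₁, θ₂, αp, αm) ∈ (stdFormPolyhedron w a).extremePoints ℝ)
    {δd : Fin k → Fin n → ℝ} {δt : Fin k → ℝ} {δs : Fin n → ℝ}
    (hδ : ∀ i j, δd i j + w j * δt i + δs j = 0)
    (hd : ∀ i j, β i j = γ i j → δd i j = 0) (ht : ∀ i, θ₁ i = θ₂ i → δt i = 0)
    (hs : ∀ j, αp j = αm j → δs j = 0) : δt = 0 ∧ δs = 0 := by
  obtain ⟨-, hβ₀, hγ₀, hθ₁₀, hθ₂₀, hαp₀, hαm₀⟩ := extremePoints_subset hp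
  have hd' i j : β i j + γ i j = 0 → δd i j = 0 := fun h =>
    hd i j (by linarith [hβ₀ i j, hγ₀ i j])
  have ht' i : θ₁ i + θ₂ i = 0 → δt i = 0 := fun h => ht i (by linarith [hθ₁₀ i, hθ₂₀ i])
  have hs' j : αp j + αm j = 0 → δs j = 0 := fun h => hs j (by linarith [hαp₀ j, hαm₀ j])
  -- Each difference direction is split over its pair in proportion to the pair's values, so it
  -- vanishes wherever the corresponding coordinate does.
  have h0 := direction_eq_zero hp
    (dβ := fun i j => δd i j * β i j / (β i j + γ i j))
    (dγ := fun i j => -(δd i j * γ i j / (β i j + γ i j)))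
    (dθ₁ := fun i => δt i * θ₁ i / (θ₁ i + θ₂ i))
    (dθ₂ := fun i => -(δt i * θ₂ i / (θ₁ i + θ₂ i)))
    (dαp := fun j => δs j * αp j / (αp j + αm j))
    (dαm := fun j => -(δs j * αm j / (αp j + αm j)))
    (fun i j => by
      linear_combination mul_div_add_mul_div_eq_self (hd' i j) +
        w j * mul_div_add_mul_div_eq_self (ht' i) + mul_div_add_mul_div_eq_self (hs' j) + hδ i j)
    (by simp_all) (by simp_all) (by simp_all) (by simp_all) (by simp_all) (by simp_all)
  simp only [Prod.mk_eq_zero, funext_iff, Pi.zero_apply] at h0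
  obtain ⟨-, -, hθ₁, hθ₂, hαp, hαm⟩ := h0
  refine ⟨funext fun i => show δt i = 0 from ?_, funext fun j => show δs j = 0 from ?_⟩
  · linear_combination (mul_div_add_mul_div_eq_self (ht' i)).symm + hθ₁ i - hθ₂ i
  · linear_combination (mul_div_add_mul_div_eq_self (hs' j)).symm + hαp j - hαm j

theorem alphaPlus_eq_alphaMinus_of_w_eq_zero
    (hp : (β, γ, θ₁, θ₂, αp, αm) ∈ (stdFormPolyhedron w a).extremePoints ℝ)
    {j : Fin n} (hwj : w j = 0) : αp j = αm j := by
  obtain ⟨heq, -⟩ := extremePoints_subset hp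
  by_contra hne
  have h0 := (reduced_direction_eq_zero hp (δd := fun _ => -Pi.single j 1) (δt := 0)
    (δs := Pi.single j 1) (by simp) ?_ (by simp) ?_).2
  · simpa using congrFun h0 j
  · intro i j' hβγ
    rcases eq_or_ne j' j with rfl | hj
    · exact absurd (by linear_combination heq i j' - hβγ + (a i - θ₁ i + θ₂ i) * hwj) hne
    · simp [hj]
  · intro j' hα
    rcases eq_or_ne j' j with rfl | hj
    · exact absurd hα hne
    · simp [hj]

theorem levels_ne (hw : ∀ j, w j = 0 ∨ w j = 1 ∨ w j = -1) (ha : ∀ i, a i = 0 ∨ a i = 1)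
    (hp : (β, γ, θ₁, θ₂, αp, αm) ∈ (stdFormPolyhedron w a).extremePoints ℝ)
    {c : ℝ} (hc₀ : c ≠ 0) (hc₁ : c ≠ 1) :
    (∀ i, a i - (θ₁ i - θ₂ i) ≠ c) ∧ (∀ j, w j * (αp j - αm j) ≠ c) := by
  obtain ⟨heq, -⟩ := extremePoints_subset hp
  -- Raise by one every `uᵢ = aᵢ - (θ₁ᵢ - θ₂ᵢ)` and every `vⱼ = wⱼ (α₊ⱼ - α₋ⱼ)` equal to `c`.
  have h0 := reduced_direction_eq_zero hp
    (δd := fun i j => w j * ((if a i - (θ₁ i - θ₂ i) = c then 1 else 0) -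
      (if w j * (αp j - αm j) = c then 1 else 0)))
    (δt := fun i => -(if a i - (θ₁ i - θ₂ i) = c then 1 else 0))
    (δs := fun j => w j * (if w j * (αp j - αm j) = c then 1 else 0))
    (fun i j => by ring) ?_ ?_ ?_
  · refine ⟨fun i hi => ?_, fun j hj => ?_⟩
    · simpa [hi] using congrFun h0.1 i
    · have hwj : w j = 0 := by simpa [hj] using congrFun h0.2 j
      exact hc₀ (by rw [← hj, hwj, zero_mul])
  · intro i j hβγ
    have hs : αp j - αm j = w j * (a i - (θ₁ i - θ₂ i)) := by
      linear_combination heq i j - hβγ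
    rcases hw j with h | h | h <;> simp [h, hs]
  · intro i hθ
    have : a i - (θ₁ i - θ₂ i) ≠ c := by
      rw [hθ, sub_self, sub_zero]
      rcases ha i with h | h <;> rw [h]
      exacts [hc₀.symm, hc₁.symm]
    simp [this]
  · intro j hα
    have : w j * (αp j - αm j) ≠ c := by rw [hα, sub_self, mul_zero]; exact hc₀.symm
    simp [this]

theorem levels_eq_zero_or_one (hw : ∀ j, w j = 0 ∨ w j = 1 ∨ w j = -1)
    (ha : ∀ i, a i = 0 ∨ a i = 1)
    (hp : (β, γ, θ₁, θ₂, αp, αm) ∈ (stdFormPolyhedron w a).extremePoints ℝ) :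
    (∀ i, a i - (θ₁ i - θ₂ i) = 0 ∨ a i - (θ₁ i - θ₂ i) = 1) ∧
      (∀ j, w j * (αp j - αm j) = 0 ∨ w j * (αp j - αm j) = 1) := by
  refine ⟨fun i => ?_, fun j => ?_⟩ <;> by_contra! h
  exacts [(levels_ne hw ha hp h.1 h.2).1 i rfl, (levels_ne hw ha hp h.1 h.2).2 j rfl]

theorem alphaPlus_sub_alphaMinus_eq (hw : ∀ j, w j = 0 ∨ w j = 1 ∨ w j = -1)
    (hp : (β, γ, θ₁, θ₂, αp, αm) ∈ (stdFormPolyhedron w a).extremePoints ℝ) (j : Fin n) :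
    αp j - αm j = w j * (w j * (αp j - αm j)) := by
  rcases hw j with h | h | h
  · rw [h, zero_mul, sub_eq_zero]
    exact alphaPlus_eq_alphaMinus_of_w_eq_zero hp h
  all_goals rw [h]; ring

end stdFormPolyhedron

/-- every extreme point of the standard-form polyhedron with right-hand
side aᵢ w has all coordinates in {0,1}. Points are tuples (β, γ, θ₁, θ₂, α₊, α₋). -/
theorem stmt3 (n k : ℕ) (w : Fin n → ℝ) (hw : ∀ j, w j = 0 ∨ w j = 1 ∨ w j = -1)
    (a : Fin k → ℝ) (ha : ∀ i, a i = 0 ∨ a i = 1)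
    (P : Set ((Fin k → Fin n → ℝ) × (Fin k → Fin n → ℝ) × (Fin k → ℝ) × (Fin k → ℝ) ×
      (Fin n → ℝ) × (Fin n → ℝ)))
    (hP : ∀ p, p ∈ P ↔
      (∀ i j, p.1 i j - p.2.1 i j + w j * p.2.2.1 i - w j * p.2.2.2.1 i
          + p.2.2.2.2.1 j - p.2.2.2.2.2 j = a i * w j) ∧
      (∀ i j, 0 ≤ p.1 i j) ∧ (∀ i j, 0 ≤ p.2.1 i j) ∧
      (∀ i, 0 ≤ p.2.2.1 i) ∧ (∀ i, 0 ≤ p.2.2.2.1 i) ∧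
      (∀ j, 0 ≤ p.2.2.2.2.1 j) ∧ (∀ j, 0 ≤ p.2.2.2.2.2 j))
    (p : (Fin k → Fin n → ℝ) × (Fin k → Fin n → ℝ) × (Fin k → ℝ) × (Fin k → ℝ) ×
      (Fin n → ℝ) × (Fin n → ℝ))
    (hp : p ∈ Set.extremePoints ℝ P) :
    (∀ i j, p.1 i j = 0 ∨ p.1 i j = 1) ∧ (∀ i j, p.2.1 i j = 0 ∨ p.2.1 i j = 1) ∧
    (∀ i, p.2.2.1 i = 0 ∨ p.2.2.1 i = 1) ∧ (∀ i, p.2.2.2.1 i = 0 ∨ p.2.2.2.1 i = 1) ∧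
    (∀ j, p.2.2.2.2.1 j = 0 ∨ p.2.2.2.2.1 j = 1) ∧
    (∀ j, p.2.2.2.2.2 j = 0 ∨ p.2.2.2.2.2 j = 1) := by
  obtain rfl : P = stdFormPolyhedron w a := Set.ext hP
  obtain ⟨β, γ, θ₁, θ₂, αp, αm⟩ := p
  obtain ⟨heq, hβ₀, hγ₀, hθ₁₀, hθ₂₀, hαp₀, hαm₀⟩ := extremePoints_subset hp
  obtain ⟨hβγ, hθ, hα⟩ := stdFormPolyhedron.complementary hp
  obtain ⟨hu, hv⟩ := stdFormPolyhedron.levels_eq_zero_or_one hw ha hp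
  have hs j := stdFormPolyhedron.alphaPlus_sub_alphaMinus_eq hw hp j
  have hd i j : β i j - γ i j = w j * (a i - (θ₁ i - θ₂ i) - w j * (αp j - αm j)) := by
    linear_combination heq i j - hs j
  have ht i : θ₁ i - θ₂ i = 1 * (a i - (a i - (θ₁ i - θ₂ i))) := by ring
  have hβγ' i j := eq_zero_or_one_of_sub_eq (hβ₀ i j) (hγ₀ i j) (hβγ i j) <| by
    rw [hd i j]; exact mul_sub_eq_neg_one_or_zero_or_one (hw j) (hu i) (hv j)
  have hθ' i := eq_zero_or_one_of_sub_eq (hθ₁₀ i) (hθ₂₀ i) (hθ i) <| by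
    rw [ht i]; exact mul_sub_eq_neg_one_or_zero_or_one (by norm_num) (ha i) (hu i)
  have hα' j := eq_zero_or_one_of_sub_eq (hαp₀ j) (hαm₀ j) (hα j) <| by
    rw [hs j, ← sub_zero (w j * (αp j - αm j))]
    exact mul_sub_eq_neg_one_or_zero_or_one (hw j) (hv j) (by norm_num)
  exact ⟨fun i j => (hβγ' i j).1, fun i j => (hβγ' i j).2, fun i => (hθ' i).1,
    fun i => (hθ' i).2, fun j => (hα' j).1, fun j => (hα' j).2⟩
end

section
/- Let f : [L, U] → ℝ be a continuous univariate piecewise linear function with k pieces. Then there exist continuous staircase functions f₁, …, f_m on [L, U], with m ≤ k, such that f = f₁ + ⋯ + f_m. -/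
/-- `f` is piecewise linear on `[L,U]` with `k` pieces, with breakpoints `h`,
slopes `a`, intercepts `d`: `f t = a i * t + d i` on `[h i, h (i+1))`, closed at `U`. -/
def PWLWith (f : ℝ → ℝ) (L U : ℝ) (k : ℕ) (h : Fin (k + 1) → ℝ) (a d : Fin k → ℝ) : Prop :=
  StrictMono h ∧ h 0 = L ∧ h (Fin.last k) = U ∧
    (∀ i : Fin k, ∀ t ∈ Set.Ico (h i.castSucc) (h i.succ), f t = a i * t + d i) ∧
    (∀ i : Fin k, i.succ = Fin.last k → f (h i.succ) = a i * h i.succ + d i)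

/-- `f` is piecewise linear on `[L,U]` with `k` pieces. -/
def IsPWL (f : ℝ → ℝ) (L U : ℝ) (k : ℕ) : Prop :=
  ∃ h a d, PWLWith f L U k h a d

/-- `f` is a staircase function on `[L,U]`: piecewise linear with all slopes in `{0,s}`
for a single `s`. -/
def IsStaircase (f : ℝ → ℝ) (L U : ℝ) : Prop :=
  ∃ (k : ℕ) (h : Fin (k + 1) → ℝ) (a d : Fin k → ℝ) (s : ℝ),
    PWLWith f L U k h a d ∧ ∀ i, a i = 0 ∨ a i = s

open Set

/-!
Write `h₀ < ⋯ < h_k` for the breakpoints and `a_j` for the slopes of `f`. The ramp of the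
piece `[h_j, h_{j+1}]` is `0` to its left, rises with slope `1` across it and is
`h_{j+1} - h_j` to its right. On the piece `[h_i, h_{i+1}]` the function
`f - ∑ⱼ a_j · ramp_j` therefore has slope `a_i - a_i = 0`, so by continuity of `f` it is
constant on `[L, U]`, with value `f L`. Hence `f` is the sum of the `k` functions
`a_j · ramp_j + f L / k`, each of which has slopes in `{0, a_j}`.
-/

/-- The length of `[p, q] ∩ (-∞, t]` when `p ≤ q`. -/
def ramp (p q t : ℝ) : ℝ := min (max t p) q - p

@[fun_prop]
lemma continuous_ramp (p q : ℝ) : Continuous (ramp p q) :=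
  ((continuous_id.max continuous_const).min continuous_const).sub continuous_const

lemma ramp_of_le_left {p q t : ℝ} (hpq : p ≤ q) (ht : t ≤ p) : ramp p q t = 0 := by
  simp [ramp, max_eq_right ht, min_eq_left hpq]

lemma ramp_of_right_le {p q t : ℝ} (hpq : p ≤ q) (ht : q ≤ t) : ramp p q t = q - p := by
  simp [ramp, max_eq_left (hpq.trans ht), min_eq_right ht]

lemma ramp_of_mem_Icc {p q t : ℝ} (ht : t ∈ Icc p q) : ramp p q t = t - p := by
  simp [ramp, max_eq_left ht.1, min_eq_left ht.2]

section Breakpoints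

variable {k : ℕ} {h : Fin (k + 1) → ℝ}

lemma ramp_eq_on_piece (hh : Monotone h) {i j : Fin k} {t : ℝ}
    (ht : t ∈ Icc (h i.castSucc) (h i.succ)) :
    ramp (h j.castSucc) (h j.succ) t =
      ramp (h j.castSucc) (h j.succ) (h i.castSucc) + (if i = j then t - h i.castSucc else 0) := by
  have hj : h j.castSucc ≤ h j.succ := hh (Fin.castSucc_le_succ _)
  rcases lt_trichotomy i j with hij | rfl | hji
  · have hle : h i.succ ≤ h j.castSucc := hh (Fin.succ_le_castSucc_iff.mpr hij)
    rw [ramp_of_le_left hj (ht.2.trans hle),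
      ramp_of_le_left hj ((hh (Fin.castSucc_le_succ _)).trans hle), if_neg hij.ne]
    simp
  · rw [ramp_of_mem_Icc ht, ramp_of_le_left hj le_rfl]
    simp
  · have hle : h j.succ ≤ h i.castSucc := hh (Fin.succ_le_castSucc_iff.mpr hji)
    rw [ramp_of_right_le hj (hle.trans ht.1), ramp_of_right_le hj hle, if_neg hji.ne']
    simp

lemma eq_of_forall_eq_on_piece (hh : Monotone h) {g : ℝ → ℝ}
    (hg : ∀ i : Fin k, ∀ t ∈ Icc (h i.castSucc) (h i.succ), g t = g (h i.castSucc)) :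
    ∀ t ∈ Icc (h 0) (h (Fin.last k)), g t = g (h 0) := by
  suffices ∀ j : Fin (k + 1), ∀ t ∈ Icc (h 0) (h j), g t = g (h 0) from this _
  intro j
  induction j using Fin.induction with
  | zero => rintro t ⟨h1, h2⟩; rw [le_antisymm h2 h1]
  | succ i ih =>
    rintro t ⟨h1, h2⟩
    rcases le_total t (h i.castSucc) with hti | hit
    · exact ih t ⟨h1, hti⟩
    · rw [hg i t ⟨hit, h2⟩]
      exact ih _ ⟨hh (Fin.zero_le _), le_rfl⟩

lemma pwlWith_of_eq_on_piece {g : ℝ → ℝ} {L U : ℝ} (hh : StrictMono h) (hL : h 0 = L)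
    (hU : h (Fin.last k) = U) {b : Fin k → ℝ}
    (hg : ∀ i : Fin k, ∀ t ∈ Icc (h i.castSucc) (h i.succ),
      g t = g (h i.castSucc) + b i * (t - h i.castSucc)) :
    PWLWith g L U k h b (fun i => g (h i.castSucc) - b i * h i.castSucc) := by
  refine ⟨hh, hL, hU, fun i t ht => ?_, fun i _ => ?_⟩
  · rw [hg i t (Ico_subset_Icc_self ht)]; ring
  · rw [hg i _ ⟨(hh Fin.castSucc_lt_succ).le, le_rfl⟩]; ring

lemma isStaircase_mul_ramp_add {L U : ℝ} (hh : StrictMono h) (hL : h 0 = L)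
    (hU : h (Fin.last k) = U) (j : Fin k) (s c : ℝ) :
    IsStaircase (fun t => s * ramp (h j.castSucc) (h j.succ) t + c) L U := by
  refine ⟨k, h, _, _, s, pwlWith_of_eq_on_piece hh hL hU
    (b := fun i => if i = j then s else 0) fun i t ht => ?_, fun i => ?_⟩
  · rw [ramp_eq_on_piece hh.monotone ht]
    split_ifs <;> ring
  · split_ifs <;> simp

end Breakpoints

namespace PWLWith

variable {f : ℝ → ℝ} {L U : ℝ} {k : ℕ} {h : Fin (k + 1) → ℝ} {a d : Fin k → ℝ}

/-- Continuity closes each piece at its right end. -/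
lemma eq_on_Icc (hp : PWLWith f L U k h a d) (hcont : ContinuousOn f (Icc L U)) (i : Fin k) :
    ∀ t ∈ Icc (h i.castSucc) (h i.succ), f t = a i * t + d i := by
  obtain ⟨hh, hL, hU, hpiece, -⟩ := hp
  have hsub : Icc (h i.castSucc) (h i.succ) ⊆ Icc L U :=
    Icc_subset_Icc (hL ▸ hh.monotone (Fin.zero_le _)) (hU ▸ hh.monotone (Fin.le_last _))
  refine EqOn.of_subset_closure (hpiece i) (hcont.mono hsub) (by fun_prop) Ico_subset_Icc_self ?_
  rw [closure_Ico (hh Fin.castSucc_lt_succ).ne]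

lemma eq_add_sum_ramp (hp : PWLWith f L U k h a d) (hcont : ContinuousOn f (Icc L U)) :
    ∀ t ∈ Icc L U, f t = f L + ∑ j, a j * ramp (h j.castSucc) (h j.succ) t := by
  have hf := hp.eq_on_Icc hcont
  obtain ⟨hh, hL, hU, -⟩ := hp
  set R : ℝ → ℝ := fun t => ∑ j, a j * ramp (h j.castSucc) (h j.succ) t
  have hR : ∀ i : Fin k, ∀ t ∈ Icc (h i.castSucc) (h i.succ),
      R t = R (h i.castSucc) + a i * (t - h i.castSucc) := by
    intro i t ht
    simp only [R, ramp_eq_on_piece hh.monotone ht, mul_add, Finset.sum_add_distrib, mul_ite,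
      mul_zero, Finset.sum_ite_eq, Finset.mem_univ, if_true]
  have hconst := eq_of_forall_eq_on_piece hh.monotone (g := fun t => f t - R t) fun i t ht => by
    rw [hf i t ht, hf i _ ⟨le_rfl, (hh Fin.castSucc_lt_succ).le⟩, hR i t ht]
    ring
  have hR0 : R L = 0 := Finset.sum_eq_zero fun j _ => by
    rw [← hL, ramp_of_le_left (hh Fin.castSucc_lt_succ).le (hh.monotone (Fin.zero_le _)),
      mul_zero]
  intro t ht
  have := hconst t (hL ▸ hU ▸ ht)
  simp only [hL, hR0] at this
  linarith

end PWLWith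

/-- a continuous piecewise linear function with `k` pieces on `[L,U]`
is a sum of at most `k` continuous staircase functions. -/
theorem stmt4 (L U : ℝ) (hLU : L < U) (f : ℝ → ℝ) (k : ℕ)
    (hf : IsPWL f L U k) (hcont : ContinuousOn f (Set.Icc L U)) :
    ∃ (m : ℕ), m ≤ k ∧ ∃ F : Fin m → ℝ → ℝ,
      (∀ v, ContinuousOn (F v) (Set.Icc L U) ∧ IsStaircase (F v) L U) ∧
      ∀ t ∈ Set.Icc L U, f t = ∑ v, F v t := by
  obtain ⟨h, a, d, hp⟩ := hf
  have hsum := hp.eq_add_sum_ramp hcont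
  obtain ⟨hh, hL, hU, -⟩ := hp
  have hk : k ≠ 0 := by
    rintro rfl
    exact hLU.ne (hL.symm.trans hU)
  refine ⟨k, le_rfl, fun j t => a j * ramp (h j.castSucc) (h j.succ) t + f L / k,
    fun j => ⟨by fun_prop, isStaircase_mul_ramp_add hh hL hU j _ _⟩, fun t ht => ?_⟩
  rw [hsum t ht, Finset.sum_add_distrib, Finset.sum_const, Finset.card_univ, Fintype.card_fin,
    nsmul_eq_mul, mul_div_cancel₀ _ (Nat.cast_ne_zero.mpr hk), add_comm]
end

section
/- Let D ⊂ ℝ^n be a compact box, g : D → ℝ piecewise affine with pieces D¹,…,D^k, and C(g) the convex hull of the Cayley embedding of g. For every α ∈ ℝ^n, the inequality y ≤ α·x + ∑_{i=1}^k (max_{x^i ∈ D^i} (c_i − α)·x^i + d̄_i) z_i, where g(x) = c_i·x + d̄_i on D^i, is valid for C(g). Moreover, a point (x̂, ŷ, ẑ) ∈ D × ℝ × Δ^k with ẑ in the simplex satisfies ŷ ≤ min_α [α·x̂ + ∑_i (max_{x^i ∈ D^i}(c_i − α)·x^i + d̄_i) ẑ_i] together with the symmetric lower-bound family if and only if (x̂,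 ŷ, ẑ) ∈ C(g). -/
/-!
Validity: each inequality is linear in `(x, y, z)` and holds at the Cayley points, where
`z = eⁱ` and `(cᵢ - α) ⬝ᵥ x ≤ max_{Dⁱ} (cᵢ - α) ⬝ᵥ x'`; hence it holds on their convex hull.

Sufficiency: `C(g)` is the convex hull of a compact set in finite dimension, hence compact, so a
point of `D × ℝ × Δᵏ` outside it is strictly separated by a functional `a ⬝ᵥ x + b y + γ ⬝ᵥ z`.
If `b > 0` the upper inequality for `α = -a / b` fails at the point; if `b < 0` the lower one
does (`y ↦ -y` exchanges the two families); if `b = 0` the upper bounds for `α = -t a` tend to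
`-∞` as `t → ∞`.
-/

open Set

section

variable {n k : ℕ}

theorem IsCompact.convexHull_of_finiteDimensional {E : Type*} [NormedAddCommGroup E]
    [NormedSpace ℝ E] [FiniteDimensional ℝ E] {s : Set E} (hs : IsCompact s) :
    IsCompact (convexHull ℝ s) := by
  -- Carathéodory: a point of the hull is a convex combination of at most `finrank + 1` points
  have hull_eq : convexHull ℝ s = ⋃ m : Fin (Module.finrank ℝ E + 2),
      (fun q : (Fin m → ℝ) × (Fin m → E) => ∑ i, q.1 i • q.2 i) ''
        (stdSimplex ℝ (Fin m) ×ˢ univ.pi fun _ => s) := by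
    refine Subset.antisymm (fun x hx => ?_) (iUnion_subset fun m => ?_)
    · obtain ⟨ι, _, z, w, hzs, hz, hw0, hw1, rfl⟩ := eq_pos_convex_span_of_mem_convexHull hx
      have hcard : Fintype.card ι < Module.finrank ℝ E + 2 :=
        Nat.lt_succ_of_le (hz.card_le_finrank_succ.trans
          (Nat.succ_le_succ (Submodule.finrank_le _)))
      set e := Fintype.equivFin ι
      refine mem_iUnion.2 ⟨⟨_, hcard⟩, (w ∘ e.symm, z ∘ e.symm), ⟨⟨fun i => (hw0 _).le, ?_⟩,
        fun i _ => hzs (mem_range_self _)⟩, ?_⟩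
      · simpa [← hw1] using e.symm.sum_comp w
      · exact e.symm.sum_comp fun i => w i • z i
    · rintro _ ⟨⟨w, z⟩, ⟨hw, hz⟩, rfl⟩
      exact (convex_convexHull ℝ s).sum_mem (fun i _ => hw.1 i) hw.2
        fun i _ => subset_convexHull ℝ s (hz i (mem_univ i))
  rw [hull_eq]
  exact isCompact_iUnion fun m => ((isCompact_stdSimplex _ _).prod
    (isCompact_univ_pi fun _ => hs)).image (by fun_prop)

lemma IsCompact.le_csSup_image {X : Type*} [TopologicalSpace X] {s : Set X} (hs : IsCompact s)
    {f : X → ℝ} (hf : Continuous f) {x : X} (hx : x ∈ s) : f x ≤ sSup (f '' s) :=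
  le_csSup (hs.image hf).bddAbove (mem_image_of_mem f hx)

lemma IsCompact.csInf_image_le {X : Type*} [TopologicalSpace X] {s : Set X} (hs : IsCompact s)
    {f : X → ℝ} (hf : Continuous f) {x : X} (hx : x ∈ s) : sInf (f '' s) ≤ f x :=
  csInf_le (hs.image hf).bddBelow (mem_image_of_mem f hx)

lemma const_sub_dotProduct_of_sum_eq_one {z : Fin k → ℝ} (hz : ∑ i, z i = 1) (r : ℝ)
    (γ : Fin k → ℝ) :
    (fun i => r - γ i) ⬝ᵥ z = r - γ ⬝ᵥ z := by
  simp only [dotProduct, sub_mul, Finset.sum_sub_distrib, ← Finset.mul_sum, hz, mul_one]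

def cayleyFunctional (a : Fin n → ℝ) (b : ℝ) (γ : Fin k → ℝ) :
    ((Fin n → ℝ) × ℝ × (Fin k → ℝ)) →ₗ[ℝ] ℝ where
  toFun p := a ⬝ᵥ p.1 + b * p.2.1 + γ ⬝ᵥ p.2.2
  map_add' p q := by
    simp only [Prod.fst_add, Prod.snd_add, dotProduct_add]
    ring
  map_smul' t p := by
    simp only [Prod.smul_fst, Prod.smul_snd, dotProduct_smul, smul_eq_mul, RingHom.id_apply]
    ring

@[simp]
lemma cayleyFunctional_apply (a : Fin n → ℝ) (b : ℝ) (γ : Fin k → ℝ)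
    (p : (Fin n → ℝ) × ℝ × (Fin k → ℝ)) :
    cayleyFunctional a b γ p = a ⬝ᵥ p.1 + b * p.2.1 + γ ⬝ᵥ p.2.2 :=
  rfl

lemma LinearMap.eq_cayleyFunctional (f : ((Fin n → ℝ) × ℝ × (Fin k → ℝ)) →ₗ[ℝ] ℝ) :
    f = cayleyFunctional (fun j => f (Pi.single j 1, 0, 0)) (f (0, 1, 0))
      (fun i => f (0, 0, Pi.single i 1)) := by
  ext <;> simp [Prod.mk_zero_zero]

lemma exists_cayleyFunctional_separating {C : Set ((Fin n → ℝ) × ℝ × (Fin k → ℝ))}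
    (hconv : Convex ℝ C) (hclosed : IsClosed C) {p : (Fin n → ℝ) × ℝ × (Fin k → ℝ)}
    (hp : p ∉ C) : ∃ a b γ u₀, (∀ q ∈ C, cayleyFunctional a b γ q < u₀) ∧
      u₀ < cayleyFunctional a b γ p := by
  obtain ⟨f, u₀, hC, hp⟩ := geometric_hahn_banach_closed_point hconv hclosed hp
  have hf := LinearMap.congr_fun f.toLinearMap.eq_cayleyFunctional
  exact ⟨_, _, _, u₀, fun q hq => hf q ▸ hC q hq, hf p ▸ hp⟩

variable {D : Fin k → Set (Fin n → ℝ)} {c : Fin k → Fin n → ℝ} {d : Fin k → ℝ}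

variable (D c d) in
def cayleyPoints : Set ((Fin n → ℝ) × ℝ × (Fin k → ℝ)) :=
  ⋃ i, (fun x => (x, c i ⬝ᵥ x + d i, fun i' => if i' = i then 1 else 0)) '' D i

lemma isCompact_cayleyPoints (hD : ∀ i, IsCompact (D i)) : IsCompact (cayleyPoints D c d) :=
  isCompact_iUnion fun i => (hD i).image (by fun_prop)

lemma mk_mem_cayleyPoints {i : Fin k} {x : Fin n → ℝ} (hx : x ∈ D i) :
    (x, c i ⬝ᵥ x + d i, fun i' => if i' = i then 1 else 0) ∈ cayleyPoints D c d :=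
  mem_iUnion.2 ⟨i, mem_image_of_mem _ hx⟩

lemma cayleyFunctional_le_of_mem_convexHull {a : Fin n → ℝ} {b : ℝ} {γ : Fin k → ℝ} {r : ℝ}
    (h : ∀ i, ∀ x ∈ D i, a ⬝ᵥ x + b * (c i ⬝ᵥ x + d i) + γ i ≤ r)
    {p : (Fin n → ℝ) × ℝ × (Fin k → ℝ)} (hp : p ∈ convexHull ℝ (cayleyPoints D c d)) :
    cayleyFunctional a b γ p ≤ r := by
  refine convexHull_min ?_ (convex_halfSpace_le (cayleyFunctional a b γ).isLinear r) hp
  simp only [cayleyPoints, iUnion_subset_iff, image_subset_iff]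
  intro i x hx
  simpa [dotProduct] using h i x hx

variable (D c d) in
noncomputable def cayleyUpper (α x : Fin n → ℝ) (z : Fin k → ℝ) : ℝ :=
  α ⬝ᵥ x + ∑ i, (sSup ((fun x' => (c i - α) ⬝ᵥ x') '' D i) + d i) * z i

variable (D c d) in
noncomputable def cayleyLower (α x : Fin n → ℝ) (z : Fin k → ℝ) : ℝ :=
  α ⬝ᵥ x + ∑ i, (sInf ((fun x' => (c i - α) ⬝ᵥ x') '' D i) + d i) * z i

lemma cayleyLower_eq_neg_cayleyUpper (α x : Fin n → ℝ) (z : Fin k → ℝ) :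
    cayleyLower D c d α x z = -cayleyUpper D (-c) (-d) (-α) x z := by
  simp only [cayleyLower, cayleyUpper, Real.sInf_def, ← image_neg_eq_neg, image_image,
    neg_dotProduct, ← neg_sub', sub_dotProduct, neg_add, ← Finset.sum_neg_distrib, neg_neg,
    Pi.neg_apply]
  exact congrArg _ (Finset.sum_congr rfl fun i _ => by ring)

lemma le_cayleyUpper_of_mem_convexHull (hD : ∀ i, IsCompact (D i)) (α : Fin n → ℝ)
    {p : (Fin n → ℝ) × ℝ × (Fin k → ℝ)} (hp : p ∈ convexHull ℝ (cayleyPoints D c d)) :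
    p.2.1 ≤ cayleyUpper D c d α p.1 p.2.2 := by
  set M : Fin k → ℝ := fun i => sSup ((fun x' => (c i - α) ⬝ᵥ x') '' D i) + d i
  have h := cayleyFunctional_le_of_mem_convexHull (a := -α) (b := 1) (γ := -M) (r := 0)
    (fun i x hx => ?_) hp
  · simp only [cayleyFunctional_apply, neg_dotProduct] at h
    change _ ≤ α ⬝ᵥ p.1 + M ⬝ᵥ p.2.2
    linarith
  · have hmax := (hD i).le_csSup_image (f := ((c i - α) ⬝ᵥ ·)) (by fun_prop) hx
    simp only [sub_dotProduct, neg_dotProduct, M, Pi.neg_apply] at hmax ⊢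
    linarith

lemma cayleyLower_le_of_mem_convexHull (hD : ∀ i, IsCompact (D i)) (α : Fin n → ℝ)
    {p : (Fin n → ℝ) × ℝ × (Fin k → ℝ)} (hp : p ∈ convexHull ℝ (cayleyPoints D c d)) :
    cayleyLower D c d α p.1 p.2.2 ≤ p.2.1 := by
  set M : Fin k → ℝ := fun i => sInf ((fun x' => (c i - α) ⬝ᵥ x') '' D i) + d i
  have h := cayleyFunctional_le_of_mem_convexHull (a := α) (b := -1) (γ := M) (r := 0)
    (fun i x hx => ?_) hp
  · simp only [cayleyFunctional_apply] at h
    change α ⬝ᵥ p.1 + M ⬝ᵥ p.2.2 ≤ _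
    linarith
  · have hmin := (hD i).csInf_image_le (f := ((c i - α) ⬝ᵥ ·)) (by fun_prop) hx
    simp only [sub_dotProduct, M] at hmin ⊢
    linarith

lemma cayleyUpper_le_of_forall_le (hne : ∀ i, (D i).Nonempty) {α x : Fin n → ℝ}
    {z : Fin k → ℝ} (hz : 0 ≤ z) {N : Fin k → ℝ}
    (h : ∀ i, ∀ x' ∈ D i, (c i - α) ⬝ᵥ x' + d i ≤ N i) :
    cayleyUpper D c d α x z ≤ α ⬝ᵥ x + N ⬝ᵥ z := by
  refine (add_le_add_iff_left _).2 (dotProduct_le_dotProduct_of_nonneg_right (fun i => ?_) hz)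
  exact le_sub_iff_add_le.1 <| csSup_le ((hne i).image _) <| forall_mem_image.2 fun x' hx' =>
    le_sub_iff_add_le.2 (h i x' hx')

lemma cayleyUpper_lt_of_separated_of_pos (hne : ∀ i, (D i).Nonempty) {a x : Fin n → ℝ}
    {y b u₀ : ℝ} {γ z : Fin k → ℝ} (hz : z ∈ stdSimplex ℝ (Fin k)) (hb : 0 < b)
    (hS : ∀ i, ∀ x' ∈ D i, a ⬝ᵥ x' + b * (c i ⬝ᵥ x' + d i) + γ i ≤ u₀)
    (hp : u₀ < a ⬝ᵥ x + b * y + γ ⬝ᵥ z) :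
    cayleyUpper D c d (-(b⁻¹ • a)) x z < y := by
  have hN : ∀ i, ∀ x' ∈ D i, (c i - -(b⁻¹ • a)) ⬝ᵥ x' + d i ≤ (b⁻¹ • fun i => u₀ - γ i) i := by
    intro i x' hx'
    have key : (b⁻¹ • fun i => u₀ - γ i) i - ((c i - -(b⁻¹ • a)) ⬝ᵥ x' + d i) =
        b⁻¹ * (u₀ - (a ⬝ᵥ x' + b * (c i ⬝ᵥ x' + d i) + γ i)) := by
      simp only [Pi.smul_apply, smul_eq_mul, sub_neg_eq_add, add_dotProduct, smul_dotProduct]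
      field_simp
      ring
    exact sub_nonneg.1 (key ▸ mul_nonneg (inv_nonneg.2 hb.le) (sub_nonneg.2 (hS i x' hx')))
  calc cayleyUpper D c d (-(b⁻¹ • a)) x z
      ≤ -(b⁻¹ • a) ⬝ᵥ x + (b⁻¹ • fun i => u₀ - γ i) ⬝ᵥ z :=
        cayleyUpper_le_of_forall_le hne hz.1 hN
    _ = b⁻¹ * (u₀ - a ⬝ᵥ x - γ ⬝ᵥ z) := by
        rw [neg_dotProduct, smul_dotProduct, smul_dotProduct,
          const_sub_dotProduct_of_sum_eq_one hz.2]
        simp only [smul_eq_mul]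
        ring
    _ < y := by
        rw [inv_mul_lt_iff₀ hb]
        linarith

lemma exists_cayleyUpper_lt_of_separated_of_zero (hD : ∀ i, IsCompact (D i))
    (hne : ∀ i, (D i).Nonempty) {a x : Fin n → ℝ} {u₀ : ℝ} {γ z : Fin k → ℝ}
    (hz : z ∈ stdSimplex ℝ (Fin k)) (hS : ∀ i, ∀ x' ∈ D i, a ⬝ᵥ x' + γ i ≤ u₀)
    (hp : u₀ < a ⬝ᵥ x + γ ⬝ᵥ z) (y : ℝ) : ∃ α, cayleyUpper D c d α x z < y := by
  set K : Fin k → ℝ := fun i => sSup ((c i ⬝ᵥ ·) '' D i) + d i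
  obtain ⟨t, ht⟩ := exists_nat_gt ((K ⬝ᵥ z - y) / (a ⬝ᵥ x + γ ⬝ᵥ z - u₀))
  rw [div_lt_iff₀ (by linarith)] at ht
  refine ⟨-((t : ℝ) • a), lt_of_le_of_lt (cayleyUpper_le_of_forall_le hne hz.1
    (N := K + (t : ℝ) • fun i => u₀ - γ i) fun i x' hx' => ?_) ?_⟩
  · have h1 := (hD i).le_csSup_image (f := (c i ⬝ᵥ ·)) (by fun_prop) hx'
    have h2 := mul_le_mul_of_nonneg_left (le_sub_iff_add_le.2 (hS i x' hx')) t.cast_nonneg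
    simp only [sub_neg_eq_add, add_dotProduct, smul_dotProduct, smul_eq_mul, Pi.add_apply,
      Pi.smul_apply, K]
    linarith
  · rw [neg_dotProduct, smul_dotProduct, add_dotProduct, smul_dotProduct,
      const_sub_dotProduct_of_sum_eq_one hz.2]
    simp only [smul_eq_mul]
    linarith

lemma mem_convexHull_cayleyPoints (hD : ∀ i, IsCompact (D i)) (hne : ∀ i, (D i).Nonempty)
    {x : Fin n → ℝ} {y : ℝ} {z : Fin k → ℝ} (hz : z ∈ stdSimplex ℝ (Fin k))
    (hup : ∀ α, y ≤ cayleyUpper D c d α x z) (hlo : ∀ α, cayleyLower D c d α x z ≤ y) :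
    (x, y, z) ∈ convexHull ℝ (cayleyPoints D c d) := by
  by_contra hxyz
  obtain ⟨a, b, γ, u₀, hS, hp⟩ := exists_cayleyFunctional_separating (convex_convexHull ℝ _)
    (isCompact_cayleyPoints hD).convexHull_of_finiteDimensional.isClosed hxyz
  replace hS : ∀ i, ∀ x' ∈ D i, a ⬝ᵥ x' + b * (c i ⬝ᵥ x' + d i) + γ i ≤ u₀ := fun i x' hx' => by
    simpa [dotProduct] using (hS _ (subset_convexHull ℝ _ (mk_mem_cayleyPoints hx'))).le
  simp only [cayleyFunctional_apply] at hp
  rcases lt_trichotomy b 0 with hb | rfl | hb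
  · -- reflect `y ↦ -y`, which swaps the two families
    have hS' : ∀ i, ∀ x' ∈ D i, a ⬝ᵥ x' + -b * ((-c) i ⬝ᵥ x' + (-d) i) + γ i ≤ u₀ :=
      fun i x' hx' => by
        simp only [Pi.neg_apply, neg_dotProduct]
        linarith [hS i x' hx']
    have hlt := cayleyUpper_lt_of_separated_of_pos hne hz (neg_pos.2 hb) hS' (y := -y)
      (by linarith)
    have hle := hlo ((-b)⁻¹ • a)
    rw [cayleyLower_eq_neg_cayleyUpper] at hle
    linarith
  · obtain ⟨α, hα⟩ := exists_cayleyUpper_lt_of_separated_of_zero (c := c) (d := d) hD hne hz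
      (fun i x' hx' => by simpa using hS i x' hx') (by simpa using hp) y
    linarith [hup α]
  · linarith [hup (-(b⁻¹ • a)), cayleyUpper_lt_of_separated_of_pos hne hz hb hS hp]

end

theorem stmt12_general (n k : ℕ) (l u : Fin n → ℝ)
    (D : Fin k → Set (Fin n → ℝ))
    (hDne : ∀ i, (D i).Nonempty)
    (hDcomp : ∀ i, IsCompact (D i))
    (g : (Fin n → ℝ) → ℝ) (c : Fin k → Fin n → ℝ) (d : Fin k → ℝ)
    (hg : ∀ i, ∀ x ∈ D i, g x = (∑ j, c i j * x j) + d i)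
    (Cg : Set ((Fin n → ℝ) × ℝ × (Fin k → ℝ)))
    (hCg : Cg = convexHull ℝ (⋃ i : Fin k,
      (fun x => (x, g x, fun i' => if i' = i then (1:ℝ) else 0)) '' D i))
    (upper lower : (Fin n → ℝ) → (Fin n → ℝ) → (Fin k → ℝ) → ℝ)
    (hupper : ∀ α x z, upper α x z = (∑ j, α j * x j) +
      ∑ i, (sSup ((fun x' => ∑ j, (c i j - α j) * x' j) '' D i) + d i) * z i)
    (hlower : ∀ α x z, lower α x z = (∑ j, α j * x j) +
      ∑ i, (sInf ((fun x' => ∑ j, (c i j - α j) * x' j) '' D i) + d i) * z i) :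
    (∀ α : Fin n → ℝ, ∀ p ∈ Cg, p.2.1 ≤ upper α p.1 p.2.2) ∧
    (∀ p : (Fin n → ℝ) × ℝ × (Fin k → ℝ),
      p.1 ∈ Set.Icc l u → (∀ i, 0 ≤ p.2.2 i) → (∑ i, p.2.2 i) = 1 →
      (((∀ α, p.2.1 ≤ upper α p.1 p.2.2) ∧ (∀ α, lower α p.1 p.2.2 ≤ p.2.1)) ↔
        p ∈ Cg)) := by
  obtain rfl : Cg = convexHull ℝ (cayleyPoints D c d) :=
    hCg.trans (congrArg _ (iUnion_congr fun i => image_congr fun x hx => by rw [hg i x hx]; rfl))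
  obtain rfl : upper = cayleyUpper D c d := funext fun α => funext fun x => funext (hupper α x)
  obtain rfl : lower = cayleyLower D c d := funext fun α => funext fun x => funext (hlower α x)
  refine ⟨fun α p hp => le_cayleyUpper_of_mem_convexHull hDcomp α hp, ?_⟩
  rintro ⟨x, y, z⟩ - hz₀ hz₁
  exact ⟨fun ⟨hup, hlo⟩ => mem_convexHull_cayleyPoints hDcomp hDne ⟨hz₀, hz₁⟩ hup hlo,
    fun hp => ⟨fun α => le_cayleyUpper_of_mem_convexHull hDcomp α hp,
      fun α => cayleyLower_le_of_mem_convexHull hDcomp α hp⟩⟩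

/-- validity and sufficiency of the Cayley-embedding inequality families.
For every α the upper inequality is valid for C(g); and a point of D × ℝ × Δ^k lies in
C(g) iff it satisfies the upper family for every α and the symmetric lower family. -/
theorem stmt12 (n k : ℕ) (l u : Fin n → ℝ) (hlu : l ≤ u)
    (D : Fin k → Set (Fin n → ℝ))
    (hDsub : ∀ i, D i ⊆ Set.Icc l u) (hDcover : (⋃ i, D i) = Set.Icc l u)
    (hDconv : ∀ i, Convex ℝ (D i)) (hDne : ∀ i, (D i).Nonempty)
    (hDcomp : ∀ i, IsCompact (D i))
    (g : (Fin n → ℝ) → ℝ) (c : Fin k → Fin n → ℝ) (d : Fin k → ℝ)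
    (hg : ∀ i, ∀ x ∈ D i, g x = (∑ j, c i j * x j) + d i)
    (Cg : Set ((Fin n → ℝ) × ℝ × (Fin k → ℝ)))
    (hCg : Cg = convexHull ℝ (⋃ i : Fin k,
      (fun x => (x, g x, fun i' => if i' = i then (1:ℝ) else 0)) '' D i))
    (upper lower : (Fin n → ℝ) → (Fin n → ℝ) → (Fin k → ℝ) → ℝ)
    (hupper : ∀ α x z, upper α x z = (∑ j, α j * x j) +
      ∑ i, (sSup ((fun x' => ∑ j, (c i j - α j) * x' j) '' D i) + d i) * z i)
    (hlower : ∀ α x z, lower α x z = (∑ j, α j * x j) +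
      ∑ i, (sInf ((fun x' => ∑ j, (c i j - α j) * x' j) '' D i) + d i) * z i) :
    (∀ α : Fin n → ℝ, ∀ p ∈ Cg, p.2.1 ≤ upper α p.1 p.2.2) ∧
    (∀ p : (Fin n → ℝ) × ℝ × (Fin k → ℝ),
      p.1 ∈ Set.Icc l u → (∀ i, 0 ≤ p.2.2 i) → (∑ i, p.2.2 i) = 1 →
      (((∀ α, p.2.1 ≤ upper α p.1 p.2.2) ∧ (∀ α, lower α p.1 p.2.2 ≤ p.2.1)) ↔
        p ∈ Cg)) :=
  stmt12_general n k l u D hDne hDcomp g c d hg Cg hCg upper lower hupper hlower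
end

section
/- Let S¹,…,S^k ⊆ ℝ^n be defined by S^i = {x : L ≤ x ≤ U, h_{i−1} ≤ w·x ≤ h_i} with h₀ = min_{L≤x≤U} w·x and h_k = max_{L≤x≤U} w·x and h₀ < h₁ < ⋯ < h_k. Let c ∈ ℝ^n, let x* be an optimal solution of max{c·x : L ≤ x ≤ U}, and let i* be an index with x* ∈ S^{i*}. Then for every i > i*, every optimal solution x̂^i of max{c·x : x ∈ S^i} satisfies w·x̂^i = h_{i−1}, and for every i < i*, every optimal solution satisfies w·x̂^i = h_i, provided c is not identically a scalar multiple of w restricted to the free coordinates (i.e., the box-unconstrained optimum over S^i is not attained in the interior of the slab). -/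
/-!
Let `x` be an optimum of `c·x` over a slab lying above the slab of the box optimum `x*`. If `x`
were off the lower face of its slab, then walking from `x` towards `x*` the value of `w·x` runs
down through the open slab while `c·x` does not decrease, because `c·x ≤ c·x*`; this produces a
slab optimum in the open slab. Slabs below `x*` are the same statement for `-w`.
-/

open Set

section Slab

variable {𝕜 E : Type*} [Field 𝕜] [LinearOrder 𝕜] [IsStrictOrderedRing 𝕜]
  [AddCommGroup E] [Module 𝕜 E]

def slab (K : Set E) (g : E →ₗ[𝕜] 𝕜) (a b : 𝕜) : Set E := {x | x ∈ K ∧ g x ∈ Icc a b}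

lemma slab_neg (K : Set E) (g : E →ₗ[𝕜] 𝕜) (a b : 𝕜) :
    slab K (-g) (-b) (-a) = slab K g a b := by
  ext x
  simp only [slab, mem_ofPred_eq, LinearMap.neg_apply, neg_mem_Icc_iff, neg_neg]

lemma exists_mem_segment_apply_eq_of_apply_le (f g : E →ₗ[𝕜] 𝕜) {x z : E} {v : 𝕜}
    (hzv : g z ≤ v) (hvx : v ≤ g x) (hfxz : f x ≤ f z) :
    ∃ y ∈ segment 𝕜 z x, g y = v ∧ f x ≤ f y := by
  have hv : v ∈ g.toAffineMap '' segment 𝕜 z x := by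
    rw [image_segment, LinearMap.coe_toAffineMap, segment_eq_Icc (hzv.trans hvx)]
    exact ⟨hzv, hvx⟩
  obtain ⟨y, hy, rfl⟩ := hv
  have hfy : f y ∈ f.toAffineMap '' segment 𝕜 z x := mem_image_of_mem _ hy
  rw [image_segment, LinearMap.coe_toAffineMap, segment_symm, segment_eq_Icc hfxz] at hfy
  exact ⟨y, hy, rfl, hfy.1⟩

variable {K : Set E} {f g : E →ₗ[𝕜] 𝕜} {a b : 𝕜} {x z : E}

lemma IsMaxOn.apply_eq_left_of_slab (hK : Convex 𝕜 K) (hx : x ∈ slab K g a b)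
    (hmax : IsMaxOn f (slab K g a b) x) (hz : z ∈ K) (hza : g z ≤ a) (hfxz : f x ≤ f z)
    (hno : ∀ y ∈ slab K g a b, IsMaxOn f (slab K g a b) y → g y ∉ Ioo a b) :
    g x = a := by
  by_contra hne
  have hax : a < g x := lt_of_le_of_ne hx.2.1 (Ne.symm hne)
  obtain ⟨y, hy, hgy, hfy⟩ := exists_mem_segment_apply_eq_of_apply_le f g
    (v := (a + g x) / 2) (by linarith) (by linarith) hfxz
  have hgy_mem : g y ∈ Ioo a b := by constructor <;> linarith [hx.2.2]
  have hy_slab : y ∈ slab K g a b :=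
    ⟨hK.segment_subset hz hx.1 hy, Ioo_subset_Icc_self hgy_mem⟩
  exact hno y hy_slab (fun u hu => (hmax hu).trans hfy) hgy_mem

lemma IsMaxOn.apply_eq_right_of_slab (hK : Convex 𝕜 K) (hx : x ∈ slab K g a b)
    (hmax : IsMaxOn f (slab K g a b) x) (hz : z ∈ K) (hbz : b ≤ g z) (hfxz : f x ≤ f z)
    (hno : ∀ y ∈ slab K g a b, IsMaxOn f (slab K g a b) y → g y ∉ Ioo a b) :
    g x = b := by
  rw [← slab_neg] at hx hmax hno
  have hneg : (-g) x = -b := hmax.apply_eq_left_of_slab hK hx hz (neg_le_neg hbz) hfxz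
    fun y hy hymax hgy => hno y hy hymax <| by
      rwa [LinearMap.neg_apply, neg_mem_Ioo_iff, neg_neg, neg_neg] at hgy
  simpa using hneg

end Slab

theorem stmt13_general (n k : ℕ) (L U w c : Fin n → ℝ)
    (h : Fin (k + 1) → ℝ) (hmono : StrictMono h)
    (S : Fin k → Set (Fin n → ℝ))
    (hS : ∀ i, S i = {x | x ∈ Set.Icc L U ∧
      h i.castSucc ≤ ∑ j, w j * x j ∧ (∑ j, w j * x j) ≤ h i.succ})
    (xstar : Fin n → ℝ) (hxstar : xstar ∈ Set.Icc L U)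
    (hopt : ∀ y ∈ Set.Icc L U, (∑ j, c j * y j) ≤ ∑ j, c j * xstar j)
    (istar : Fin k) (histar : xstar ∈ S istar)
    -- proviso: over each slab, no optimum is attained in the open interior of the slab
    (hnointerior : ∀ i : Fin k, ∀ x ∈ S i, (∀ y ∈ S i, (∑ j, c j * y j) ≤ ∑ j, c j * x j) →
      ¬(h i.castSucc < (∑ j, w j * x j) ∧ (∑ j, w j * x j) < h i.succ)) :
    (∀ i : Fin k, istar < i → ∀ x ∈ S i,
      (∀ y ∈ S i, (∑ j, c j * y j) ≤ ∑ j, c j * x j) →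
        (∑ j, w j * x j) = h i.castSucc) ∧
    (∀ i : Fin k, i < istar → ∀ x ∈ S i,
      (∀ y ∈ S i, (∑ j, c j * y j) ≤ ∑ j, c j * x j) →
        (∑ j, w j * x j) = h i.succ) := by
  have hslab : ∀ i, S i = slab (Icc L U) (dotProductBilin ℝ ℝ w) (h i.castSucc) (h i.succ) :=
    hS
  simp only [hslab] at histar hnointerior ⊢
  refine ⟨fun i hi x hx hmax => ?_, fun i hi x hx hmax => ?_⟩
  · have hstar_le : dotProductBilin ℝ ℝ w xstar ≤ h i.castSucc :=
      histar.2.2.trans (hmono.monotone (Fin.succ_le_castSucc_iff.2 hi))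
    exact IsMaxOn.apply_eq_left_of_slab (f := dotProductBilin ℝ ℝ c) (convex_Icc L U)
      hx hmax hxstar hstar_le (hopt x hx.1) (hnointerior i)
  · have hle_star : h i.succ ≤ dotProductBilin ℝ ℝ w xstar :=
      (hmono.monotone (Fin.succ_le_castSucc_iff.2 hi)).trans histar.2.1
    exact IsMaxOn.apply_eq_right_of_slab (f := dotProductBilin ℝ ℝ c) (convex_Icc L U)
      hx hmax hxstar hle_star (hopt x hx.1) (hnointerior i)

/-- optimizing c·x over the slabs S^i of a box: for slabs above the slab
containing the box optimum, every slab optimum is active at the lower hyperplane, and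
symmetrically below, provided the slab optimum is never attained in the slab interior. -/
theorem stmt13 (n k : ℕ) (L U w c : Fin n → ℝ) (hLU : L ≤ U)
    (h : Fin (k + 1) → ℝ) (hmono : StrictMono h)
    (h0 : IsLeast ((fun x => ∑ j, w j * x j) '' Set.Icc L U) (h 0))
    (hk : IsGreatest ((fun x => ∑ j, w j * x j) '' Set.Icc L U) (h (Fin.last k)))
    (S : Fin k → Set (Fin n → ℝ))
    (hS : ∀ i, S i = {x | x ∈ Set.Icc L U ∧
      h i.castSucc ≤ ∑ j, w j * x j ∧ (∑ j, w j * x j) ≤ h i.succ})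
    (xstar : Fin n → ℝ) (hxstar : xstar ∈ Set.Icc L U)
    (hopt : ∀ y ∈ Set.Icc L U, (∑ j, c j * y j) ≤ ∑ j, c j * xstar j)
    (istar : Fin k) (histar : xstar ∈ S istar)
    -- proviso: over each slab, no optimum is attained in the open interior of the slab
    (hnointerior : ∀ i : Fin k, ∀ x ∈ S i, (∀ y ∈ S i, (∑ j, c j * y j) ≤ ∑ j, c j * x j) →
      ¬(h i.castSucc < (∑ j, w j * x j) ∧ (∑ j, w j * x j) < h i.succ)) :
    (∀ i : Fin k, istar < i → ∀ x ∈ S i,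
      (∀ y ∈ S i, (∑ j, c j * y j) ≤ ∑ j, c j * x j) →
        (∑ j, w j * x j) = h i.castSucc) ∧
    (∀ i : Fin k, i < istar → ∀ x ∈ S i,
      (∀ y ∈ S i, (∑ j, c j * y j) ≤ ∑ j, c j * x j) →
        (∑ j, w j * x j) = h i.succ) :=
  stmt13_general n k L U w c h hmono S hS xstar hxstar hopt istar histar hnointerior
end
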